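/- arXiv:2204.13564 — 4 statements merged into one kernel-verified Lean document; each statement's English description precedes it below -/
import Mathlib

section
/- In the wreath product G(r,n) = C_r ≀ S_n, for every element (h,σ), the elements (h,σ) and (h_{σ^{-1}}, σ^{-1}) are conjugate in G(r,n). -/
/-!
Conjugate `(h, σ)` by `(f, τ)`, where `τ` reflects every cycle of `σ` about a chosen point `a` of
it, `σ ^ k a ↦ σ ^ (-k) a`, so that `τ σ τ⁻¹ = σ⁻¹`. The remaining condition is the recurrence
`f (σ i) = f i * h (τ i) / h (σ i)`, which can be solved around each cycle because `σ` and `τ`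
both preserve the cycle, so the product of `h (τ i) / h (σ i)` over it is `1`.
-/

/-- The action of a permutation on tuples, as a monoid homomorphism into the
multiplicative automorphisms of the product group `Fin n → A`. -/
def permAut (A : Type*) [Group A] (n : ℕ) :
    Equiv.Perm (Fin n) →* MulAut (Fin n → A) where
  toFun σ :=
    { toFun := fun f i => f (σ⁻¹ i)
      invFun := fun f i => f (σ i)
      left_inv := fun f => funext fun i => by simp
      right_inv := fun f => funext fun i => by simp
      map_mul' := fun f g => rfl }
  map_one' := by
    refine MulEquiv.ext fun f => funext fun i => ?_
    simp
  map_mul' := fun σ τ => by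
    refine MulEquiv.ext fun f => funext fun i => ?_
    simp [mul_inv_rev]

/-- The wreath product `A ≀ Sₙ`, realized as a semidirect product
`(Fin n → A) ⋊ Perm (Fin n)`, with multiplication `(f,τ)(h,σ) = (f · h_τ, τσ)`
where `h_τ i = h (τ⁻¹ i)`. -/
abbrev GW (A : Type*) [Group A] (n : ℕ) :=
  SemidirectProduct (Fin n → A) (Equiv.Perm (Fin n)) (permAut A n)

/-- The map `ī_n : (h, σ) ↦ (h_{σ⁻¹}, σ⁻¹)`; note `h_{σ⁻¹} i = h (σ i)`. -/
def ibar {A : Type*} [Group A] {n : ℕ} (x : GW A n) : GW A n :=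
  ⟨fun i => x.left (x.right i), x.right⁻¹⟩

/-- The cyclic group of order `r` (multiplicative). -/
abbrev Cr (r : ℕ) := Multiplicative (ZMod r)

open Equiv Finset Function

theorem Commute.inv_apply_eq_inv_apply_of_apply_eq {α : Type*} {p q : Perm α}
    (hpq : Commute p q) {a : α} (h : p a = q a) : p⁻¹ a = q⁻¹ a := by
  rw [Perm.inv_eq_iff_eq, ← Perm.mul_apply, hpq.inv_right.eq, Perm.mul_apply, h,
    Perm.eq_inv_iff_eq]

namespace Equiv.Perm

variable {α : Type*}

theorem minimalPeriod_pos [Finite α] (σ : Perm α) (x : α) : 0 < minimalPeriod σ x :=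
  minimalPeriod_pos_of_mem_periodicPts (σ.injective.mem_periodicPts x)

theorem pow_apply_eq_pow_apply_iff [Finite α] (σ : Perm α) {x : α} {j k : ℕ} :
    (σ ^ j) x = (σ ^ k) x ↔ j ≡ k [MOD minimalPeriod σ x] := by
  have hpos := minimalPeriod_pos σ x
  rw [coe_pow, coe_pow, ← iterate_mod_minimalPeriod_eq, ← iterate_mod_minimalPeriod_eq (n := k),
    iterate_eq_iterate_iff_of_lt_minimalPeriod (Nat.mod_lt _ hpos) (Nat.mod_lt _ hpos)]
  rfl

theorem prod_range_minimalPeriod_eq_prod_sameCycle [Fintype α] [DecidableEq α] {M : Type*}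
    [CommMonoid M] (σ : Perm α) (g : α → M) (x : α) :
    ∏ l ∈ range (minimalPeriod σ x), g ((σ ^ l) x) = ∏ y ∈ univ.filter (σ.SameCycle x), g y := by
  refine prod_nbij (fun l => (σ ^ l) x) (fun l _ => by simp [SameCycle.refl]) ?_ ?_
    (fun _ _ => rfl)
  · intro j hj k hk hjk
    simp only [coe_range, coe_pow] at hj hk hjk
    exact iterate_injOn_Iio_minimalPeriod hj hk hjk
  · intro y hy
    obtain ⟨k, hk⟩ := (mem_filter.1 hy).2.exists_nat_pow_eq
    refine ⟨k % minimalPeriod σ x, ?_, ?_⟩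
    · exact mem_range.2 (Nat.mod_lt _ (minimalPeriod_pos σ x))
    · rw [← hk]; exact (pow_apply_eq_pow_apply_iff σ).2 (Nat.mod_modEq _ _)

theorem prod_sameCycle_comp [Fintype α] [DecidableEq α] {M : Type*} [CommMonoid M]
    {σ : Perm α} (π : Perm α) (hπ : ∀ x, σ.SameCycle x (π x)) (g : α → M) (x : α) :
    ∏ y ∈ univ.filter (σ.SameCycle x), g (π y) = ∏ y ∈ univ.filter (σ.SameCycle x), g y :=
  prod_equiv π (fun y => by simpa using ⟨fun h => h.trans (hπ y), fun h => h.trans (hπ y).symm⟩)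
    (fun _ _ => rfl)

noncomputable def cycleAnchor (σ : Perm α) (x : α) : α :=
  (Quotient.mk (SameCycle.setoid σ) x).out

theorem sameCycle_cycleAnchor (σ : Perm α) (x : α) : σ.SameCycle (cycleAnchor σ x) x :=
  Quotient.mk_out (s := SameCycle.setoid σ) x

theorem SameCycle.cycleAnchor_eq {σ : Perm α} {x y : α} (h : σ.SameCycle x y) :
    cycleAnchor σ x = cycleAnchor σ y :=
  congrArg Quotient.out (Quotient.sound (s := SameCycle.setoid σ) h)

theorem cycleAnchor_apply (σ : Perm α) (x : α) : cycleAnchor σ (σ x) = cycleAnchor σ x :=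
  (SameCycle.refl σ x |>.apply_right).cycleAnchor_eq.symm

section Finite

variable [Finite α]

noncomputable def cycleIndex (σ : Perm α) (x : α) : ℕ :=
  (sameCycle_cycleAnchor σ x).exists_nat_pow_eq.choose

theorem pow_cycleIndex_apply (σ : Perm α) (x : α) :
    (σ ^ cycleIndex σ x) (cycleAnchor σ x) = x :=
  (sameCycle_cycleAnchor σ x).exists_nat_pow_eq.choose_spec

noncomputable def cycleReflect (σ : Perm α) (x : α) : α :=
  (σ ^ cycleIndex σ x)⁻¹ (cycleAnchor σ x)

theorem sameCycle_cycleReflect (σ : Perm α) (x : α) : σ.SameCycle x (cycleReflect σ x) := by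
  rw [cycleReflect, ← zpow_natCast, ← zpow_neg]
  exact (sameCycle_cycleAnchor σ x).symm.zpow_right

theorem cycleReflect_involutive (σ : Perm α) : Involutive (cycleReflect σ) := by
  intro x
  have ha := (sameCycle_cycleReflect σ x).cycleAnchor_eq
  have h : (σ ^ cycleIndex σ (cycleReflect σ x)) (cycleAnchor σ x) =
      ((σ ^ cycleIndex σ x)⁻¹) (cycleAnchor σ x) := by
    rw [ha, pow_cycleIndex_apply, ← ha]; rfl
  rw [cycleReflect, ← ha,
    (Commute.pow_pow_self σ _ _).inv_right.inv_apply_eq_inv_apply_of_apply_eq h, inv_inv,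
    pow_cycleIndex_apply]

theorem cycleReflect_apply (σ : Perm α) (x : α) :
    cycleReflect σ (σ x) = σ⁻¹ (cycleReflect σ x) := by
  have h : (σ ^ cycleIndex σ (σ x)) (cycleAnchor σ x) =
      (σ ^ (cycleIndex σ x + 1)) (cycleAnchor σ x) := by
    rw [← cycleAnchor_apply σ x, pow_cycleIndex_apply, pow_succ', mul_apply, cycleAnchor_apply,
      pow_cycleIndex_apply]
  rw [cycleReflect, cycleAnchor_apply,
    (Commute.pow_pow_self σ _ _).inv_apply_eq_inv_apply_of_apply_eq h, pow_succ, mul_inv_rev,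
    mul_apply, cycleReflect]

theorem exists_apply_eq_mul_of_prod_sameCycle_eq_one [Fintype α] [DecidableEq α] {A : Type*}
    [CommGroup A] (σ : Perm α) (g : α → A)
    (hg : ∀ x, ∏ y ∈ univ.filter (σ.SameCycle x), g y = 1) :
    ∃ f : α → A, ∀ x, f (σ x) = f x * g x := by
  let P (a : α) (j : ℕ) : A := ∏ l ∈ range j, g ((σ ^ l) a)
  have hP (a : α) : Periodic (P a) (minimalPeriod σ a) := fun j => by
    have hper : (σ ^ minimalPeriod σ a) a = a := by
      rw [coe_pow]; exact isPeriodicPt_minimalPeriod σ a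
    simp only [P]
    rw [add_comm j, prod_range_add, prod_range_minimalPeriod_eq_prod_sameCycle, hg, one_mul]
    exact prod_congr rfl fun l _ => by rw [add_comm, pow_add, mul_apply, hper]
  refine ⟨fun x => P (cycleAnchor σ x) (cycleIndex σ x), fun x => ?_⟩
  have hidx :
      cycleIndex σ (σ x) ≡ cycleIndex σ x + 1 [MOD minimalPeriod σ (cycleAnchor σ x)] := by
    rw [← pow_apply_eq_pow_apply_iff, ← cycleAnchor_apply, pow_cycleIndex_apply, pow_succ',
      mul_apply, cycleAnchor_apply, pow_cycleIndex_apply]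
  beta_reduce
  rw [cycleAnchor_apply, ← (hP _).map_mod_nat, hidx, (hP _).map_mod_nat]
  simp only [P, prod_range_succ, pow_cycleIndex_apply]

end Finite

end Equiv.Perm

theorem isConj_ibar {A : Type*} [CommGroup A] {n : ℕ} (x : GW A n) : IsConj x (ibar x) := by
  obtain ⟨h, σ⟩ := x
  let τ : Perm (Fin n) := (Perm.cycleReflect_involutive σ).toPerm
  have hτ : ∀ i, σ.SameCycle i (τ i) := Perm.sameCycle_cycleReflect σ
  obtain ⟨f, hf⟩ := Perm.exists_apply_eq_mul_of_prod_sameCycle_eq_one σ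
    (fun i => h (τ i) / h (σ i)) fun i => by
      rw [prod_div_distrib, Perm.prod_sameCycle_comp τ hτ, Perm.prod_sameCycle_comp σ
        (fun j => (Perm.SameCycle.refl σ j).apply_right), div_self']
  refine isConj_iff.2 ⟨⟨f, τ⟩, mul_inv_eq_of_eq_mul (SemidirectProduct.ext (funext fun i => ?_) ?_)⟩
  · show f i * h (τ⁻¹ i) = h (σ i) * f (σ⁻¹⁻¹ i)
    rw [inv_inv, hf, show τ⁻¹ = τ from Involutive.toPerm_symm _, mul_left_comm, mul_div_cancel]
  · exact Equiv.ext (Perm.cycleReflect_apply σ)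

/-- In the wreath product `G(r,n) = C_r ≀ S_n`, every element `(h,σ)` is
conjugate to `(h_{σ⁻¹}, σ⁻¹)`. -/
theorem wreath_conj_ibar (r n : ℕ) (x : GW (Cr r) n) : IsConj x (ibar x) :=
  isConj_ibar x
end

section
/- The colored partition monoid CPar_k (colored (k,k)-partition diagrams, where each block of a set-partition of {1,...,k,1',...,k'} carries a color from C_r, with composition given by concatenation of diagrams and multiplying colors of merged blocks, discarding middle components) is a monoid: the composition is associative and the identity diagram (with all parts {i,i'} colored by the identity of C_r) is a two-sided identity. -/
open Relation

/-- A colored `(k,l)`-partition diagram: a set-partition (equivalence relation)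
of the `k` top vertices (`Sum.inl`) and `l` bottom vertices (`Sum.inr`),
together with a color from `C_r` attached to each block. -/
structure CDiag (r k l : ℕ) where
  rel : Setoid (Fin k ⊕ Fin l)
  col : Quotient rel → Cr r

namespace CDiag

/-- Push a setoid forward along a map (equivalence relation generated by the
image relation). -/
def push {α β : Type*} (f : α → β) (s : Setoid α) : Setoid β :=
  Relation.EqvGen.setoid fun x y => ∃ a b, s.r a b ∧ x = f a ∧ y = f b

/-- Top row of the first factor stays on top; its bottom row goes to the middle. -/
def ι₁ {k l m : ℕ} : Fin k ⊕ Fin l → Fin k ⊕ (Fin l ⊕ Fin m) :=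
  Sum.map id Sum.inl

/-- Top row of the second factor goes to the middle; its bottom row stays at the
bottom. -/
def ι₂ {k l m : ℕ} : Fin l ⊕ Fin m → Fin k ⊕ (Fin l ⊕ Fin m) :=
  Sum.inr

/-- The outer (top and bottom) vertices inside the three-row concatenation. -/
def ιo {k l m : ℕ} : Fin k ⊕ Fin m → Fin k ⊕ (Fin l ⊕ Fin m) :=
  Sum.map id Sum.inr

/-- The equivalence relation on the three rows generated by stacking `d₁` on
top of `d₂`. -/
def bigRel {r k l m : ℕ} (d₁ : CDiag r k l) (d₂ : CDiag r l m) :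
    Setoid (Fin k ⊕ (Fin l ⊕ Fin m)) :=
  push (ι₁ (m := m)) d₁.rel ⊔ push (ι₂ (k := k)) d₂.rel

/-- Linear position of a vertex (top row first, then bottom row). -/
def pos {k l : ℕ} : Fin k ⊕ Fin l → ℕ :=
  Sum.elim (fun i => (i : ℕ)) fun j => k + (j : ℕ)

/-- `a` is the canonical (least-position) representative of its block in `d`. -/
def lead {r k l : ℕ} (d : CDiag r k l) (a : Fin k ⊕ Fin l) : Prop :=
  ∀ b, d.rel.r a b → pos a ≤ pos b

/-- Concatenation of colored partition diagrams (all parameters `x_i = 1`):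
stack `d₁` on top of `d₂`, identify the bottom row of `d₁` with the top row of
`d₂`, restrict to the outer rows, color each resulting block by the product of
the colors of all blocks of `d₁` and `d₂` contributing to it, and discard the
components lying entirely in the middle. -/
noncomputable def comp {r k l m : ℕ} (d₁ : CDiag r k l) (d₂ : CDiag r l m) :
    CDiag r k m where
  rel := Setoid.comap ιo (bigRel d₁ d₂)
  col := fun q =>
    (∏ᶠ (a : Fin k ⊕ Fin l)
      (_ : lead d₁ a ∧ (bigRel d₁ d₂).r (ι₁ a) (ιo q.out)),
        d₁.col (Quotient.mk d₁.rel a)) *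
    (∏ᶠ (a : Fin l ⊕ Fin m)
      (_ : lead d₂ a ∧ (bigRel d₁ d₂).r (ι₂ a) (ιo q.out)),
        d₂.col (Quotient.mk d₂.rel a))

/-- The identity diagram: each part `{i, i'}`, all colored by the identity. -/
def idDiag (r k : ℕ) : CDiag r k k :=
  ⟨Relation.EqvGen.setoid fun x y => ∃ i, x = Sum.inl i ∧ y = Sum.inr i,
    fun _ => 1⟩

/-- A block is propagating if it meets both the top and the bottom row. -/
def Propagating {r k l : ℕ} (d : CDiag r k l) (q : Quotient d.rel) : Prop :=
  (∃ i : Fin k, Quotient.mk d.rel (Sum.inl i) = q) ∧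
  (∃ j : Fin l, Quotient.mk d.rel (Sum.inr j) = q)

/-- The rank of a colored partition diagram: its number of propagating parts. -/
noncomputable def rn {r k l : ℕ} (d : CDiag r k l) : ℕ :=
  Nat.card {q : Quotient d.rel // Propagating d q}

end CDiag

open CDiag

/-! ### Infrastructure -/



namespace CPM
attribute [local instance] Classical.propDecidable

lemma push_rel_of {α β : Type*} (f : α → β) (s : Setoid α) {a b : α} (h : s.r a b) :
    (push f s).r (f a) (f b) :=
  EqvGen.rel _ _ ⟨a, b, h, rfl, rfl⟩

lemma push_le {α β : Type*} {f : α → β} {s : Setoid α} {t : Setoid β}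
    (h : ∀ a b, s.r a b → t.r (f a) (f b)) : push f s ≤ t :=
  Setoid.eqvGen_le (by rintro x y ⟨a, b, hab, rfl, rfl⟩; exact h a b hab)

lemma rel_of_le {α : Type*} {s t : Setoid α} (h : s ≤ t) {x y : α} (hxy : s.r x y) :
    t.r x y := Setoid.le_def.mp h hxy

lemma out_rel {α : Type*} (s : Setoid α) (a : α) : s.r (Quotient.mk s a).out a :=
  Quotient.exact (Quotient.out_eq _)

lemma mk_eq_of_rel {α : Type*} (s : Setoid α) {a b : α} (h : s.r a b) :
    Quotient.mk s a = Quotient.mk s b := Quotient.sound h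

lemma pos_injective {k l : ℕ} : Function.Injective (pos (k := k) (l := l)) := by
  rintro (a | a) (b | b) h <;> simp only [pos, Sum.elim_inl, Sum.elim_inr] at h
  · exact congrArg Sum.inl (Fin.ext h)
  · exact absurd h (by have := a.2; omega)
  · exact absurd h (by have := b.2; omega)
  · exact congrArg Sum.inr (Fin.ext (by omega))

lemma lead_unique {r k l : ℕ} {d : CDiag r k l} {a b : Fin k ⊕ Fin l}
    (ha : lead d a) (hb : lead d b) (hab : d.rel.r a b) : a = b :=
  pos_injective (le_antisymm (ha b hab) (hb a (d.rel.symm hab)))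

lemma exists_lead {r k l : ℕ} (d : CDiag r k l) (x : Fin k ⊕ Fin l) :
    ∃ a, lead d a ∧ d.rel.r a x := by
  classical
  obtain ⟨a, ha, hmin⟩ := Finset.exists_min_image
    (Finset.univ.filter fun y => d.rel.r x y) pos ⟨x, Finset.mem_filter.mpr ⟨Finset.mem_univ x, d.rel.refl x⟩⟩
  simp only [Finset.mem_filter, Finset.mem_univ, true_and] at ha
  refine ⟨a, fun b hb => hmin b ?_, d.rel.symm ha⟩
  simp only [Finset.mem_filter, Finset.mem_univ, true_and]
  exact d.rel.trans ha hb

noncomputable def leadOf {r k l : ℕ} (d : CDiag r k l) (x : Fin k ⊕ Fin l) :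
    Fin k ⊕ Fin l := (exists_lead d x).choose

lemma leadOf_lead {r k l : ℕ} (d : CDiag r k l) (x : Fin k ⊕ Fin l) :
    lead d (leadOf d x) := (exists_lead d x).choose_spec.1

lemma leadOf_rel {r k l : ℕ} (d : CDiag r k l) (x : Fin k ⊕ Fin l) :
    d.rel.r (leadOf d x) x := (exists_lead d x).choose_spec.2

lemma CDiag.ext' {r k l : ℕ} {d d' : CDiag r k l} (hrel : d.rel = d'.rel)
    (hcol : ∀ a, d.col (Quotient.mk d.rel a) = d'.col (Quotient.mk d'.rel a)) :
    d = d' := by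
  obtain ⟨rel, col⟩ := d
  obtain ⟨rel', col'⟩ := d'
  dsimp at hrel
  subst hrel
  simp only [mk.injEq, heq_eq_eq, true_and]
  funext q
  induction q using Quotient.ind
  exact hcol _

/-- `∏ᶠ` over a condition equivalent to `a = a₀` is the single value. -/
lemma finprod_cond_unique {M : Type*} [CommMonoid M] {α : Type*} [Fintype α]
    (F : α → M) {p : α → Prop} {a₀ : α} (h : ∀ a, p a ↔ a = a₀) :
    (∏ᶠ (a) (_ : p a), F a) = F a₀ := by
  rw [finprod_cond_eq_prod_of_cond_iff (t := {a₀}) F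
    (fun {x} _ => by simp [h x])]
  simp

lemma finprod_cond_congr {M : Type*} [CommMonoid M] {α : Type*}
    (F : α → M) {p q : α → Prop} (h : ∀ a, p a ↔ q a) :
    (∏ᶠ (a) (_ : p a), F a) = ∏ᶠ (a) (_ : q a), F a := by
  have : p = q := funext fun a => propext (h a)
  rw [this]

noncomputable def flt {α : Type*} [Fintype α] (p : α → Prop) : Finset α :=
  Finset.univ.filter fun a => p a

lemma mem_flt {α : Type*} [Fintype α] {p : α → Prop} {a : α} :
    a ∈ flt p ↔ p a := by simp [flt]

lemma finprod_cond_eq_filter_prod {M : Type*} [CommMonoid M] {α : Type*} [Fintype α]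
    (F : α → M) (p : α → Prop) :
    (∏ᶠ (a) (_ : p a), F a) = ∏ a ∈ flt p, F a :=
  finprod_cond_eq_prod_of_cond_iff F (fun {x} _ => by simp [flt])

/-- Regrouping a double product over blocks. -/
lemma prod_regroup {M : Type*} [CommMonoid M] {α β : Type*} [Fintype α] [Fintype β]
    (F : α → M) (p Q : α → Prop) (P : β → Prop) (conn : α → β → Prop)
    (huniq : ∀ a e e', P e → P e' → conn a e → conn a e' → e = e')
    (hcov : ∀ a, Q a ↔ ∃ e, P e ∧ conn a e) :
    (∏ e ∈ flt P, ∏ a ∈ flt (fun a => p a ∧ conn a e), F a) =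
      ∏ a ∈ flt (fun a => p a ∧ Q a), F a := by
  rw [← Finset.prod_biUnion]
  · congr 1
    ext a
    simp only [Finset.mem_biUnion, mem_flt]
    constructor
    · rintro ⟨e, hP, hp, hc⟩; exact ⟨hp, (hcov a).mpr ⟨e, hP, hc⟩⟩
    · rintro ⟨hp, hQ⟩
      obtain ⟨e, hP, hc⟩ := (hcov a).mp hQ
      exact ⟨e, hP, hp, hc⟩
  · intro e he e' he' hne
    rw [Finset.mem_coe, mem_flt] at he he'
    refine Finset.disjoint_left.mpr ?_
    intro a ha ha'
    rw [mem_flt] at ha ha'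
    exact hne (huniq a e e' he he' ha.2 ha'.2)


end CPM
namespace CPM

attribute [local instance] Classical.propDecidable

abbrev F2 (k : ℕ) := Fin k ⊕ Fin k
abbrev V3 (k : ℕ) := Fin k ⊕ (Fin k ⊕ Fin k)
abbrev V4 (k : ℕ) := Fin k ⊕ (Fin k ⊕ (Fin k ⊕ Fin k))

variable {k : ℕ}

def E1 : F2 k → V4 k
  | .inl a => .inl a
  | .inr b => .inr (.inl b)

def E2 : F2 k → V4 k
  | .inl b => .inr (.inl b)
  | .inr c => .inr (.inr (.inl c))

def E3 : F2 k → V4 k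
  | .inl c => .inr (.inr (.inl c))
  | .inr d => .inr (.inr (.inr d))

def E14 : F2 k → V4 k
  | .inl a => .inl a
  | .inr d => .inr (.inr (.inr d))

def h123 : V3 k → V4 k
  | .inl a => .inl a
  | .inr (.inl b) => .inr (.inl b)
  | .inr (.inr c) => .inr (.inr (.inl c))

def h134 : V3 k → V4 k
  | .inl a => .inl a
  | .inr (.inl c) => .inr (.inr (.inl c))
  | .inr (.inr d) => .inr (.inr (.inr d))

def h234 : V3 k → V4 k := Sum.inr

def h124 : V3 k → V4 k
  | .inl a => .inl a
  | .inr (.inl b) => .inr (.inl b)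
  | .inr (.inr d) => .inr (.inr (.inr d))

lemma h123_ι₁ (x : F2 k) : h123 (ι₁ x) = E1 x := by cases x <;> rfl
lemma h123_ι₂ (x : F2 k) : h123 (ι₂ x) = E2 x := by cases x <;> rfl
lemma h134_ι₂ (x : F2 k) : h134 (ι₂ x) = E3 x := by cases x <;> rfl
lemma h134_ιo (x : F2 k) : h134 (ιo x) = E14 x := by cases x <;> rfl
lemma h134_ι₁_eq_h123_ιo (x : F2 k) : h134 (ι₁ x) = h123 (ιo x) := by cases x <;> rfl
lemma h234_ι₁ (x : F2 k) : h234 (ι₁ x) = E2 x := by cases x <;> rfl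
lemma h234_ι₂ (x : F2 k) : h234 (ι₂ x) = E3 x := by cases x <;> rfl
lemma h124_ι₁ (x : F2 k) : h124 (ι₁ x) = E1 x := by cases x <;> rfl
lemma h124_ιo (x : F2 k) : h124 (ιo x) = E14 x := by cases x <;> rfl
lemma h124_ι₂_eq_h234_ιo (x : F2 k) : h124 (ι₂ x) = h234 (ιo x) := by cases x <;> rfl

variable {r : ℕ} (d₁ d₂ d₃ : CDiag r k k)

/-- The four-row stacking relation. -/
def SS : Setoid (V4 k) :=
  push E1 d₁.rel ⊔ push E2 d₂.rel ⊔ push E3 d₃.rel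

lemma SS_rel₁ {a b : F2 k} (h : d₁.rel.r a b) : (SS d₁ d₂ d₃).r (E1 a) (E1 b) :=
  rel_of_le (le_sup_of_le_left le_sup_left) (push_rel_of _ _ h)

lemma SS_rel₂ {a b : F2 k} (h : d₂.rel.r a b) : (SS d₁ d₂ d₃).r (E2 a) (E2 b) :=
  rel_of_le (le_sup_of_le_left le_sup_right) (push_rel_of _ _ h)

lemma SS_rel₃ {a b : F2 k} (h : d₃.rel.r a b) : (SS d₁ d₂ d₃).r (E3 a) (E3 b) :=
  rel_of_le le_sup_right (push_rel_of _ _ h)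

lemma B12_le_comap : bigRel d₁ d₂ ≤ Setoid.comap h123 (SS d₁ d₂ d₃) := by
  refine sup_le (push_le fun a b h => ?_) (push_le fun a b h => ?_)
  · show (SS d₁ d₂ d₃).r (h123 (ι₁ a)) (h123 (ι₁ b))
    rw [h123_ι₁, h123_ι₁]; exact SS_rel₁ d₁ d₂ d₃ h
  · show (SS d₁ d₂ d₃).r (h123 (ι₂ a)) (h123 (ι₂ b))
    rw [h123_ι₂, h123_ι₂]; exact SS_rel₂ d₁ d₂ d₃ h

lemma B23_le_comap : bigRel d₂ d₃ ≤ Setoid.comap h234 (SS d₁ d₂ d₃) := by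
  refine sup_le (push_le fun a b h => ?_) (push_le fun a b h => ?_)
  · show (SS d₁ d₂ d₃).r (h234 (ι₁ a)) (h234 (ι₁ b))
    rw [h234_ι₁, h234_ι₁]; exact SS_rel₂ d₁ d₂ d₃ h
  · show (SS d₁ d₂ d₃).r (h234 (ι₂ a)) (h234 (ι₂ b))
    rw [h234_ι₂, h234_ι₂]; exact SS_rel₃ d₁ d₂ d₃ h

/-- `L`-relation between row-(1,3) vertices induced by outer relation in `B12`. -/
lemma L_rel_iota₁ {c c' : F2 k} (h : (bigRel d₁ d₂).r (ιo c) (ιo c')) :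
    (bigRel (comp d₁ d₂) d₃).r (ι₁ c) (ι₁ c') :=
  rel_of_le le_sup_left (push_rel_of ι₁ (comp d₁ d₂).rel h)

lemma L_rel_iota₂ {c c' : F2 k} (h : d₃.rel.r c c') :
    (bigRel (comp d₁ d₂) d₃).r (ι₂ c) (ι₂ c') :=
  rel_of_le le_sup_right (push_rel_of ι₂ d₃.rel h)

lemma L_le_comap :
    bigRel (comp d₁ d₂) d₃ ≤ Setoid.comap h134 (SS d₁ d₂ d₃) := by
  refine sup_le (push_le fun a b h => ?_) (push_le fun a b h => ?_)
  · show (SS d₁ d₂ d₃).r (h134 (ι₁ a)) (h134 (ι₁ b))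
    rw [h134_ι₁_eq_h123_ιo, h134_ι₁_eq_h123_ιo]
    exact rel_of_le (B12_le_comap d₁ d₂ d₃) h
  · show (SS d₁ d₂ d₃).r (h134 (ι₂ a)) (h134 (ι₂ b))
    rw [h134_ι₂, h134_ι₂]; exact SS_rel₃ d₁ d₂ d₃ h

noncomputable def PsiL (p : V3 k) :
    Quotient (bigRel (comp d₁ d₂) d₃) ⊕ Quotient (bigRel d₁ d₂) :=
  if h : ∃ c : F2 k, (bigRel d₁ d₂).r p (ιo c) then
    .inl (Quotient.mk _ (ι₁ h.choose))
  else .inr (Quotient.mk _ p)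

noncomputable def PhiL : V4 k →
    Quotient (bigRel (comp d₁ d₂) d₃) ⊕ Quotient (bigRel d₁ d₂)
  | .inl a => PsiL d₁ d₂ d₃ (.inl a)
  | .inr (.inl b) => PsiL d₁ d₂ d₃ (.inr (.inl b))
  | .inr (.inr (.inl c)) => PsiL d₁ d₂ d₃ (.inr (.inr c))
  | .inr (.inr (.inr d)) => .inl (Quotient.mk _ (.inr (.inr d)))

lemma PsiL_congr {p p' : V3 k} (h : (bigRel d₁ d₂).r p p') :
    PsiL d₁ d₂ d₃ p = PsiL d₁ d₂ d₃ p' := by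
  by_cases hc : ∃ c : F2 k, (bigRel d₁ d₂).r p (ιo c)
  · have hc' : ∃ c : F2 k, (bigRel d₁ d₂).r p' (ιo c) :=
      ⟨hc.choose, (bigRel d₁ d₂).trans ((bigRel d₁ d₂).symm h) hc.choose_spec⟩
    rw [PsiL, PsiL, dif_pos hc, dif_pos hc']
    exact congrArg Sum.inl (mk_eq_of_rel _ (L_rel_iota₁ d₁ d₂ d₃
      ((bigRel d₁ d₂).trans ((bigRel d₁ d₂).symm hc.choose_spec)
        ((bigRel d₁ d₂).trans h hc'.choose_spec))))
  · have hc' : ¬ ∃ c : F2 k, (bigRel d₁ d₂).r p' (ιo c) := fun ⟨c, hcc⟩ =>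
      hc ⟨c, (bigRel d₁ d₂).trans h hcc⟩
    rw [PsiL, PsiL, dif_neg hc, dif_neg hc']
    exact congrArg Sum.inr (mk_eq_of_rel _ h)

lemma PhiL_h123 (p : V3 k) : PhiL d₁ d₂ d₃ (h123 p) = PsiL d₁ d₂ d₃ p := by
  rcases p with a | b | c <;> rfl

lemma PsiL_of_outer (c : F2 k) :
    PsiL d₁ d₂ d₃ (ιo c) = .inl (Quotient.mk _ (ι₁ c)) := by
  have hc : ∃ c' : F2 k, (bigRel d₁ d₂).r (ιo c) (ιo c') := ⟨c, (bigRel d₁ d₂).refl _⟩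
  rw [PsiL, dif_pos hc]
  exact congrArg Sum.inl (mk_eq_of_rel _ (L_rel_iota₁ d₁ d₂ d₃
    ((bigRel d₁ d₂).symm hc.choose_spec)))

lemma PhiL_h134 (w : V3 k) :
    PhiL d₁ d₂ d₃ (h134 w) = .inl (Quotient.mk _ w) := by
  rcases w with a | c | d
  · exact PsiL_of_outer d₁ d₂ d₃ (Sum.inl a)
  · exact PsiL_of_outer d₁ d₂ d₃ (Sum.inr c)
  · rfl

lemma SS_le_kerPhiL : SS d₁ d₂ d₃ ≤ Setoid.ker (PhiL d₁ d₂ d₃) := by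
  have h1 : ∀ x : F2 k, PhiL d₁ d₂ d₃ (E1 x) = PsiL d₁ d₂ d₃ (ι₁ x) := by
    rintro (a | b) <;> rfl
  have h2 : ∀ x : F2 k, PhiL d₁ d₂ d₃ (E2 x) = PsiL d₁ d₂ d₃ (ι₂ x) := by
    rintro (b | c) <;> rfl
  have h3 : ∀ x : F2 k, PhiL d₁ d₂ d₃ (E3 x) = .inl (Quotient.mk _ (ι₂ x)) := by
    rintro (c | d)
    · exact PhiL_h134 d₁ d₂ d₃ (Sum.inr (Sum.inl c))
    · exact PhiL_h134 d₁ d₂ d₃ (Sum.inr (Sum.inr d))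
  refine sup_le (sup_le (push_le fun a b h => ?_) (push_le fun a b h => ?_))
    (push_le fun a b h => ?_)
  · show PhiL d₁ d₂ d₃ (E1 a) = PhiL d₁ d₂ d₃ (E1 b)
    rw [h1, h1]
    exact PsiL_congr d₁ d₂ d₃ (rel_of_le le_sup_left (push_rel_of ι₁ d₁.rel h))
  · show PhiL d₁ d₂ d₃ (E2 a) = PhiL d₁ d₂ d₃ (E2 b)
    rw [h2, h2]
    exact PsiL_congr d₁ d₂ d₃ (rel_of_le le_sup_right (push_rel_of ι₂ d₂.rel h))
  · show PhiL d₁ d₂ d₃ (E3 a) = PhiL d₁ d₂ d₃ (E3 b)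
    rw [h3, h3]
    exact congrArg Sum.inl (mk_eq_of_rel _ (L_rel_iota₂ d₁ d₂ d₃ h))

lemma L_iff (w w' : V3 k) :
    (bigRel (comp d₁ d₂) d₃).r w w' ↔
      (SS d₁ d₂ d₃).r (h134 w) (h134 w') := by
  constructor
  · exact fun h => rel_of_le (L_le_comap d₁ d₂ d₃) h
  · intro h
    have := rel_of_le (SS_le_kerPhiL d₁ d₂ d₃) h
    rw [Setoid.ker_def, PhiL_h134, PhiL_h134] at this
    exact Quotient.exact (Sum.inl.inj this)

lemma relL (x y : F2 k) :
    (comp (comp d₁ d₂) d₃).rel.r x y ↔ (SS d₁ d₂ d₃).r (E14 x) (E14 y) := by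
  have : (comp (comp d₁ d₂) d₃).rel.r x y ↔
      (bigRel (comp d₁ d₂) d₃).r (ιo x) (ιo y) := Iff.rfl
  rw [this, L_iff, h134_ιo, h134_ιo]

lemma extractL {p : V3 k} {w : V3 k}
    (h : (SS d₁ d₂ d₃).r (h123 p) (h134 w)) :
    ∃ c : F2 k, (bigRel d₁ d₂).r p (ιo c) ∧
      (bigRel (comp d₁ d₂) d₃).r (ι₁ c) w := by
  have := rel_of_le (SS_le_kerPhiL d₁ d₂ d₃) h
  rw [Setoid.ker_def, PhiL_h123, PhiL_h134] at this
  by_cases hc : ∃ c : F2 k, (bigRel d₁ d₂).r p (ιo c)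
  · refine ⟨hc.choose, hc.choose_spec, ?_⟩
    rw [PsiL, dif_pos hc] at this
    exact Quotient.exact (Sum.inl.inj this)
  · rw [PsiL, dif_neg hc] at this
    exact absurd this (by simp)

end CPM

namespace CPM

attribute [local instance] Classical.propDecidable

variable {k r : ℕ} (d₁ d₂ d₃ : CDiag r k k)

lemma R_rel_iota₂ {c c' : F2 k} (h : (bigRel d₂ d₃).r (ιo c) (ιo c')) :
    (bigRel d₁ (comp d₂ d₃)).r (ι₂ c) (ι₂ c') :=
  rel_of_le le_sup_right (push_rel_of ι₂ (comp d₂ d₃).rel h)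

lemma R_rel_iota₁ {c c' : F2 k} (h : d₁.rel.r c c') :
    (bigRel d₁ (comp d₂ d₃)).r (ι₁ c) (ι₁ c') :=
  rel_of_le le_sup_left (push_rel_of ι₁ d₁.rel h)

lemma R_le_comap :
    bigRel d₁ (comp d₂ d₃) ≤ Setoid.comap h124 (SS d₁ d₂ d₃) := by
  refine sup_le (push_le fun a b h => ?_) (push_le fun a b h => ?_)
  · show (SS d₁ d₂ d₃).r (h124 (ι₁ a)) (h124 (ι₁ b))
    rw [h124_ι₁, h124_ι₁]; exact SS_rel₁ d₁ d₂ d₃ h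
  · show (SS d₁ d₂ d₃).r (h124 (ι₂ a)) (h124 (ι₂ b))
    rw [h124_ι₂_eq_h234_ιo, h124_ι₂_eq_h234_ιo]
    exact rel_of_le (B23_le_comap d₁ d₂ d₃) h

noncomputable def PsiR (p : V3 k) :
    Quotient (bigRel d₁ (comp d₂ d₃)) ⊕ Quotient (bigRel d₂ d₃) :=
  if h : ∃ c : F2 k, (bigRel d₂ d₃).r p (ιo c) then
    .inl (Quotient.mk _ (ι₂ h.choose))
  else .inr (Quotient.mk _ p)

noncomputable def PhiR : V4 k →
    Quotient (bigRel d₁ (comp d₂ d₃)) ⊕ Quotient (bigRel d₂ d₃)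
  | .inl a => .inl (Quotient.mk _ (.inl a))
  | .inr p => PsiR d₁ d₂ d₃ p

lemma PsiR_congr {p p' : V3 k} (h : (bigRel d₂ d₃).r p p') :
    PsiR d₁ d₂ d₃ p = PsiR d₁ d₂ d₃ p' := by
  by_cases hc : ∃ c : F2 k, (bigRel d₂ d₃).r p (ιo c)
  · have hc' : ∃ c : F2 k, (bigRel d₂ d₃).r p' (ιo c) :=
      ⟨hc.choose, (bigRel d₂ d₃).trans ((bigRel d₂ d₃).symm h) hc.choose_spec⟩
    rw [PsiR, PsiR, dif_pos hc, dif_pos hc']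
    exact congrArg Sum.inl (mk_eq_of_rel _ (R_rel_iota₂ d₁ d₂ d₃
      ((bigRel d₂ d₃).trans ((bigRel d₂ d₃).symm hc.choose_spec)
        ((bigRel d₂ d₃).trans h hc'.choose_spec))))
  · have hc' : ¬ ∃ c : F2 k, (bigRel d₂ d₃).r p' (ιo c) := fun ⟨c, hcc⟩ =>
      hc ⟨c, (bigRel d₂ d₃).trans h hcc⟩
    rw [PsiR, PsiR, dif_neg hc, dif_neg hc']
    exact congrArg Sum.inr (mk_eq_of_rel _ h)

lemma PhiR_h234 (p : V3 k) : PhiR d₁ d₂ d₃ (h234 p) = PsiR d₁ d₂ d₃ p := rfl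

lemma PsiR_of_outer (c : F2 k) :
    PsiR d₁ d₂ d₃ (ιo c) = .inl (Quotient.mk _ (ι₂ c)) := by
  have hc : ∃ c' : F2 k, (bigRel d₂ d₃).r (ιo c) (ιo c') := ⟨c, (bigRel d₂ d₃).refl _⟩
  rw [PsiR, dif_pos hc]
  exact congrArg Sum.inl (mk_eq_of_rel _ (R_rel_iota₂ d₁ d₂ d₃
    ((bigRel d₂ d₃).symm hc.choose_spec)))

lemma PhiR_h124 (w : V3 k) :
    PhiR d₁ d₂ d₃ (h124 w) = .inl (Quotient.mk _ w) := by
  rcases w with a | b | d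
  · rfl
  · exact PsiR_of_outer d₁ d₂ d₃ (Sum.inl b)
  · exact PsiR_of_outer d₁ d₂ d₃ (Sum.inr d)

lemma SS_le_kerPhiR : SS d₁ d₂ d₃ ≤ Setoid.ker (PhiR d₁ d₂ d₃) := by
  have h2 : ∀ x : F2 k, PhiR d₁ d₂ d₃ (E2 x) = PsiR d₁ d₂ d₃ (ι₁ x) := by
    rintro (b | c) <;> rfl
  have h3 : ∀ x : F2 k, PhiR d₁ d₂ d₃ (E3 x) = PsiR d₁ d₂ d₃ (ι₂ x) := by
    rintro (c | d) <;> rfl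
  have h1 : ∀ x : F2 k, PhiR d₁ d₂ d₃ (E1 x) = .inl (Quotient.mk _ (ι₁ x)) := by
    rintro (a | b)
    · rfl
    · exact PhiR_h124 d₁ d₂ d₃ (Sum.inr (Sum.inl b))
  refine sup_le (sup_le (push_le fun a b h => ?_) (push_le fun a b h => ?_))
    (push_le fun a b h => ?_)
  · show PhiR d₁ d₂ d₃ (E1 a) = PhiR d₁ d₂ d₃ (E1 b)
    rw [h1, h1]
    exact congrArg Sum.inl (mk_eq_of_rel _ (R_rel_iota₁ d₁ d₂ d₃ h))
  · show PhiR d₁ d₂ d₃ (E2 a) = PhiR d₁ d₂ d₃ (E2 b)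
    rw [h2, h2]
    exact PsiR_congr d₁ d₂ d₃ (rel_of_le le_sup_left (push_rel_of ι₁ d₂.rel h))
  · show PhiR d₁ d₂ d₃ (E3 a) = PhiR d₁ d₂ d₃ (E3 b)
    rw [h3, h3]
    exact PsiR_congr d₁ d₂ d₃ (rel_of_le le_sup_right (push_rel_of ι₂ d₃.rel h))

lemma R_iff (w w' : V3 k) :
    (bigRel d₁ (comp d₂ d₃)).r w w' ↔
      (SS d₁ d₂ d₃).r (h124 w) (h124 w') := by
  constructor
  · exact fun h => rel_of_le (R_le_comap d₁ d₂ d₃) h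
  · intro h
    have := rel_of_le (SS_le_kerPhiR d₁ d₂ d₃) h
    rw [Setoid.ker_def, PhiR_h124, PhiR_h124] at this
    exact Quotient.exact (Sum.inl.inj this)

lemma relR (x y : F2 k) :
    (comp d₁ (comp d₂ d₃)).rel.r x y ↔ (SS d₁ d₂ d₃).r (E14 x) (E14 y) := by
  have : (comp d₁ (comp d₂ d₃)).rel.r x y ↔
      (bigRel d₁ (comp d₂ d₃)).r (ιo x) (ιo y) := Iff.rfl
  rw [this, R_iff, h124_ιo, h124_ιo]

lemma extractR {p : V3 k} {w : V3 k}
    (h : (SS d₁ d₂ d₃).r (h234 p) (h124 w)) :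
    ∃ c : F2 k, (bigRel d₂ d₃).r p (ιo c) ∧
      (bigRel d₁ (comp d₂ d₃)).r (ι₂ c) w := by
  have := rel_of_le (SS_le_kerPhiR d₁ d₂ d₃) h
  rw [Setoid.ker_def, PhiR_h234, PhiR_h124] at this
  by_cases hc : ∃ c : F2 k, (bigRel d₂ d₃).r p (ιo c)
  · refine ⟨hc.choose, hc.choose_spec, ?_⟩
    rw [PsiR, dif_pos hc] at this
    exact Quotient.exact (Sum.inl.inj this)
  · rw [PsiR, dif_neg hc] at this
    exact absurd this (by simp)

end CPM

namespace CPM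

attribute [local instance] Classical.propDecidable

variable {k r : ℕ} (d₁ d₂ d₃ : CDiag r k k)

lemma rel_iff_right {α : Type*} (s : Setoid α) {b c : α} (h : s.r b c) (a : α) :
    s.r a b ↔ s.r a c :=
  ⟨fun hx => s.iseqv.trans hx h, fun hx => s.iseqv.trans hx (s.iseqv.symm h)⟩

noncomputable def Pf (S' : Setoid (V4 k)) (d : CDiag r k k) (E : F2 k → V4 k)
    (z : F2 k) : Cr r :=
  ∏ᶠ (a) (_ : lead d a ∧ S'.r (E a) (E14 z)), d.col (Quotient.mk d.rel a)

lemma Pf_congr (S' : Setoid (V4 k)) (d : CDiag r k k) (E : F2 k → V4 k)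
    {z z' : F2 k} (h : S'.r (E14 z) (E14 z')) : Pf S' d E z = Pf S' d E z' :=
  finprod_cond_congr _ fun a => and_congr_right fun _ => rel_iff_right _ h _

lemma regroupL (d : CDiag r k k) (ι : F2 k → V3 k) (E : F2 k → V4 k)
    (hE : ∀ a, E a = h123 (ι a)) (z : F2 k) :
    (∏ e ∈ flt (fun e : F2 k =>
        lead (comp d₁ d₂) e ∧ (bigRel (comp d₁ d₂) d₃).r (ι₁ e) (ιo z)),
      ∏ a ∈ flt (fun a : F2 k =>
        lead d a ∧ (bigRel d₁ d₂).r (ι a) (ιo e)), d.col (Quotient.mk d.rel a)) =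
      Pf (SS d₁ d₂ d₃) d E z := by
  refine Eq.trans (prod_regroup _ _ _ _ _
    (fun a e e' hP hP' hc hc' => ?_) (fun a => ?_))
    (finprod_cond_eq_filter_prod _ _).symm
  · exact lead_unique hP.1 hP'.1
      (show (comp d₁ d₂).rel.r e e' from
        (bigRel d₁ d₂).trans ((bigRel d₁ d₂).symm hc) hc')
  · constructor
    · intro hQ
      rw [hE a, ← h134_ιo z] at hQ
      obtain ⟨c, hc1, hc2⟩ := extractL d₁ d₂ d₃ hQ
      have hlr : (bigRel d₁ d₂).r (ιo (leadOf (comp d₁ d₂) c)) (ιo c) :=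
        leadOf_rel (comp d₁ d₂) c
      refine ⟨leadOf (comp d₁ d₂) c, ⟨leadOf_lead _ _, ?_⟩, ?_⟩
      · exact (bigRel (comp d₁ d₂) d₃).trans (L_rel_iota₁ d₁ d₂ d₃ hlr) hc2
      · exact (bigRel d₁ d₂).trans hc1 ((bigRel d₁ d₂).symm hlr)
    · rintro ⟨e, ⟨hlead, hLe⟩, hconn⟩
      rw [hE a, ← h134_ιo z]
      have h1 : (SS d₁ d₂ d₃).r (h123 (ι a)) (h123 (ιo e)) :=
        rel_of_le (B12_le_comap d₁ d₂ d₃) hconn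
      rw [← h134_ι₁_eq_h123_ιo] at h1
      exact (SS d₁ d₂ d₃).trans h1 (rel_of_le (L_le_comap d₁ d₂ d₃) hLe)

lemma colL (q : Quotient (comp (comp d₁ d₂) d₃).rel) :
    (comp (comp d₁ d₂) d₃).col q =
      Pf (SS d₁ d₂ d₃) d₁ E1 q.out * Pf (SS d₁ d₂ d₃) d₂ E2 q.out *
        Pf (SS d₁ d₂ d₃) d₃ E3 q.out := by
  have hq : (comp (comp d₁ d₂) d₃).col q =
      (∏ᶠ (e) (_ : lead (comp d₁ d₂) e ∧
          (bigRel (comp d₁ d₂) d₃).r (ι₁ e) (ιo q.out)),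
        (comp d₁ d₂).col (Quotient.mk (comp d₁ d₂).rel e)) *
      (∏ᶠ (c) (_ : lead d₃ c ∧
          (bigRel (comp d₁ d₂) d₃).r (ι₂ c) (ιo q.out)),
        d₃.col (Quotient.mk d₃.rel c)) := rfl
  rw [hq]
  congr 1
  · -- the (d₁, d₂) part
    have hsummand : ∀ e : F2 k,
        (comp d₁ d₂).col (Quotient.mk (comp d₁ d₂).rel e) =
        (∏ a ∈ flt (fun a : F2 k =>
            lead d₁ a ∧ (bigRel d₁ d₂).r (ι₁ a) (ιo e)),
          d₁.col (Quotient.mk d₁.rel a)) *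
        (∏ b ∈ flt (fun b : F2 k =>
            lead d₂ b ∧ (bigRel d₁ d₂).r (ι₂ b) (ιo e)),
          d₂.col (Quotient.mk d₂.rel b)) := by
      intro e
      have hout : (bigRel d₁ d₂).r
          (ιo (Quotient.mk (comp d₁ d₂).rel e).out) (ιo e) :=
        out_rel (comp d₁ d₂).rel e
      have h0 : (comp d₁ d₂).col (Quotient.mk (comp d₁ d₂).rel e) =
          (∏ᶠ (a) (_ : lead d₁ a ∧ (bigRel d₁ d₂).r (ι₁ a)
              (ιo (Quotient.mk (comp d₁ d₂).rel e).out)),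
            d₁.col (Quotient.mk d₁.rel a)) *
          (∏ᶠ (b) (_ : lead d₂ b ∧ (bigRel d₁ d₂).r (ι₂ b)
              (ιo (Quotient.mk (comp d₁ d₂).rel e).out)),
            d₂.col (Quotient.mk d₂.rel b)) := rfl
      rw [h0,
        finprod_cond_congr (fun a => d₁.col (Quotient.mk d₁.rel a))
          (fun a => and_congr_right fun _ => rel_iff_right _ hout _),
        finprod_cond_congr (fun b => d₂.col (Quotient.mk d₂.rel b))
          (fun b => and_congr_right fun _ => rel_iff_right _ hout _),
        finprod_cond_eq_filter_prod, finprod_cond_eq_filter_prod]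
    rw [finprod_cond_eq_filter_prod, Finset.prod_congr rfl fun e _ => hsummand e,
      Finset.prod_mul_distrib,
      regroupL d₁ d₂ d₃ d₁ ι₁ E1 (fun a => (h123_ι₁ a).symm),
      regroupL d₁ d₂ d₃ d₂ ι₂ E2 (fun a => (h123_ι₂ a).symm)]
  · -- the d₃ part
    exact finprod_cond_congr _ fun c => and_congr_right fun _ => by
      rw [L_iff, h134_ι₂, h134_ιo]

lemma regroupR (d : CDiag r k k) (ι : F2 k → V3 k) (E : F2 k → V4 k)
    (hE : ∀ a, E a = h234 (ι a)) (z : F2 k) :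
    (∏ e ∈ flt (fun e : F2 k =>
        lead (comp d₂ d₃) e ∧ (bigRel d₁ (comp d₂ d₃)).r (ι₂ e) (ιo z)),
      ∏ a ∈ flt (fun a : F2 k =>
        lead d a ∧ (bigRel d₂ d₃).r (ι a) (ιo e)), d.col (Quotient.mk d.rel a)) =
      Pf (SS d₁ d₂ d₃) d E z := by
  refine Eq.trans (prod_regroup _ _ _ _ _
    (fun a e e' hP hP' hc hc' => ?_) (fun a => ?_))
    (finprod_cond_eq_filter_prod _ _).symm
  · exact lead_unique hP.1 hP'.1
      (show (comp d₂ d₃).rel.r e e' from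
        (bigRel d₂ d₃).trans ((bigRel d₂ d₃).symm hc) hc')
  · constructor
    · intro hQ
      rw [hE a, ← h124_ιo z] at hQ
      obtain ⟨c, hc1, hc2⟩ := extractR d₁ d₂ d₃ hQ
      have hlr : (bigRel d₂ d₃).r (ιo (leadOf (comp d₂ d₃) c)) (ιo c) :=
        leadOf_rel (comp d₂ d₃) c
      refine ⟨leadOf (comp d₂ d₃) c, ⟨leadOf_lead _ _, ?_⟩, ?_⟩
      · exact (bigRel d₁ (comp d₂ d₃)).trans (R_rel_iota₂ d₁ d₂ d₃ hlr) hc2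
      · exact (bigRel d₂ d₃).trans hc1 ((bigRel d₂ d₃).symm hlr)
    · rintro ⟨e, ⟨hlead, hLe⟩, hconn⟩
      rw [hE a, ← h124_ιo z]
      have h1 : (SS d₁ d₂ d₃).r (h234 (ι a)) (h234 (ιo e)) :=
        rel_of_le (B23_le_comap d₁ d₂ d₃) hconn
      rw [← h124_ι₂_eq_h234_ιo] at h1
      exact (SS d₁ d₂ d₃).trans h1 (rel_of_le (R_le_comap d₁ d₂ d₃) hLe)

lemma colR (q : Quotient (comp d₁ (comp d₂ d₃)).rel) :
    (comp d₁ (comp d₂ d₃)).col q =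
      Pf (SS d₁ d₂ d₃) d₁ E1 q.out * Pf (SS d₁ d₂ d₃) d₂ E2 q.out *
        Pf (SS d₁ d₂ d₃) d₃ E3 q.out := by
  have hq : (comp d₁ (comp d₂ d₃)).col q =
      (∏ᶠ (a) (_ : lead d₁ a ∧
          (bigRel d₁ (comp d₂ d₃)).r (ι₁ a) (ιo q.out)),
        d₁.col (Quotient.mk d₁.rel a)) *
      (∏ᶠ (e) (_ : lead (comp d₂ d₃) e ∧
          (bigRel d₁ (comp d₂ d₃)).r (ι₂ e) (ιo q.out)),
        (comp d₂ d₃).col (Quotient.mk (comp d₂ d₃).rel e)) := rfl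
  rw [hq, mul_assoc]
  congr 1
  · exact finprod_cond_congr _ fun a => and_congr_right fun _ => by
      rw [R_iff, h124_ι₁, h124_ιo]
  · have hsummand : ∀ e : F2 k,
        (comp d₂ d₃).col (Quotient.mk (comp d₂ d₃).rel e) =
        (∏ a ∈ flt (fun a : F2 k =>
            lead d₂ a ∧ (bigRel d₂ d₃).r (ι₁ a) (ιo e)),
          d₂.col (Quotient.mk d₂.rel a)) *
        (∏ b ∈ flt (fun b : F2 k =>
            lead d₃ b ∧ (bigRel d₂ d₃).r (ι₂ b) (ιo e)),
          d₃.col (Quotient.mk d₃.rel b)) := by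
      intro e
      have hout : (bigRel d₂ d₃).r
          (ιo (Quotient.mk (comp d₂ d₃).rel e).out) (ιo e) :=
        out_rel (comp d₂ d₃).rel e
      have h0 : (comp d₂ d₃).col (Quotient.mk (comp d₂ d₃).rel e) =
          (∏ᶠ (a) (_ : lead d₂ a ∧ (bigRel d₂ d₃).r (ι₁ a)
              (ιo (Quotient.mk (comp d₂ d₃).rel e).out)),
            d₂.col (Quotient.mk d₂.rel a)) *
          (∏ᶠ (b) (_ : lead d₃ b ∧ (bigRel d₂ d₃).r (ι₂ b)
              (ιo (Quotient.mk (comp d₂ d₃).rel e).out)),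
            d₃.col (Quotient.mk d₃.rel b)) := rfl
      rw [h0,
        finprod_cond_congr (fun a => d₂.col (Quotient.mk d₂.rel a))
          (fun a => and_congr_right fun _ => rel_iff_right _ hout _),
        finprod_cond_congr (fun b => d₃.col (Quotient.mk d₃.rel b))
          (fun b => and_congr_right fun _ => rel_iff_right _ hout _),
        finprod_cond_eq_filter_prod, finprod_cond_eq_filter_prod]
    rw [finprod_cond_eq_filter_prod, Finset.prod_congr rfl fun e _ => hsummand e,
      Finset.prod_mul_distrib,
      regroupR d₁ d₂ d₃ d₂ ι₁ E2 (fun a => (h234_ι₁ a).symm),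
      regroupR d₁ d₂ d₃ d₃ ι₂ E3 (fun a => (h234_ι₂ a).symm)]

theorem comp_assoc : comp (comp d₁ d₂) d₃ = comp d₁ (comp d₂ d₃) := by
  have hrel : (comp (comp d₁ d₂) d₃).rel = (comp d₁ (comp d₂ d₃)).rel :=
    Setoid.ext fun x y => (relL d₁ d₂ d₃ x y).trans (relR d₁ d₂ d₃ x y).symm
  refine CDiag.ext' hrel fun a => ?_
  rw [colL, colR]
  have h1 : (SS d₁ d₂ d₃).r
      (E14 (Quotient.mk (comp (comp d₁ d₂) d₃).rel a).out) (E14 a) :=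
    (relL d₁ d₂ d₃ _ _).mp (out_rel _ a)
  have h2 : (SS d₁ d₂ d₃).r
      (E14 (Quotient.mk (comp d₁ (comp d₂ d₃)).rel a).out) (E14 a) :=
    (relR d₁ d₂ d₃ _ _).mp (out_rel _ a)
  rw [Pf_congr _ _ _ h1, Pf_congr _ _ _ h1, Pf_congr _ _ _ h1,
    Pf_congr _ _ _ h2, Pf_congr _ _ _ h2, Pf_congr _ _ _ h2]

end CPM

namespace CPM

attribute [local instance] Classical.propDecidable

variable {k r : ℕ} (d : CDiag r k k)

lemma rel_iff_left {α : Type*} (s : Setoid α) {a b : α} (h : s.r a b) (c : α) :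
    s.r a c ↔ s.r b c :=
  ⟨fun hx => s.iseqv.trans (s.iseqv.symm h) hx, fun hx => s.iseqv.trans h hx⟩

lemma finprod_cond_one {M : Type*} [CommMonoid M] {α : Type*} [Fintype α]
    (p : α → Prop) : (∏ᶠ (a : α) (_ : p a), (1 : M)) = 1 := by
  rw [finprod_cond_eq_filter_prod]; exact Finset.prod_const_one

lemma id_rel (i : Fin k) :
    (idDiag r k).rel.r (Sum.inl i) (Sum.inr i) :=
  EqvGen.rel _ _ ⟨i, rfl, rfl⟩

/-! ### Right identity -/

def PhiIdR : V3 k → Quotient d.rel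
  | .inl a => Quotient.mk _ (.inl a)
  | .inr (.inl b) => Quotient.mk _ (.inr b)
  | .inr (.inr c) => Quotient.mk _ (.inr c)

lemma BidR_le_ker : bigRel d (idDiag r k) ≤ Setoid.ker (PhiIdR d) := by
  refine sup_le (push_le fun a b h => ?_) (push_le fun a b h => ?_)
  · have key : ∀ x : F2 k, PhiIdR d (ι₁ x) = Quotient.mk d.rel x := by
      rintro (a | b) <;> rfl
    show PhiIdR d (ι₁ a) = PhiIdR d (ι₁ b)
    rw [key, key]; exact mk_eq_of_rel _ h
  · have hker : (idDiag r k).rel ≤ Setoid.ker (fun x : F2 k => PhiIdR d (ι₂ x)) :=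
      Setoid.eqvGen_le (by rintro x y ⟨i, rfl, rfl⟩; rfl)
    exact rel_of_le hker h

lemma bridgeR (x : F2 k) : (bigRel d (idDiag r k)).r (ι₁ x) (ιo x) := by
  rcases x with a | c
  · exact (bigRel d (idDiag r k)).iseqv.refl _
  · exact rel_of_le le_sup_right (push_rel_of ι₂ (idDiag r k).rel (id_rel c))

lemma relIdR (x y : F2 k) :
    (comp d (idDiag r k)).rel.r x y ↔ d.rel.r x y := by
  have h0 : (comp d (idDiag r k)).rel.r x y ↔
      (bigRel d (idDiag r k)).r (ιo x) (ιo y) := Iff.rfl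
  rw [h0]
  constructor
  · intro h
    have := rel_of_le (BidR_le_ker d) h
    have key : ∀ z : F2 k, PhiIdR d (ιo z) = Quotient.mk d.rel z := by
      rintro (a | c) <;> rfl
    rw [Setoid.ker_def, key, key] at this
    exact Quotient.exact this
  · intro h
    have h1 := (bigRel d (idDiag r k)).iseqv.symm (bridgeR d x)
    have h2 : (bigRel d (idDiag r k)).r (ι₁ x) (ι₁ y) :=
      rel_of_le le_sup_left (push_rel_of ι₁ d.rel h)
    exact (bigRel d (idDiag r k)).iseqv.trans h1
      ((bigRel d (idDiag r k)).iseqv.trans h2 (bridgeR d y))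

lemma colIdR (q : Quotient (comp d (idDiag r k)).rel) :
    (comp d (idDiag r k)).col q = d.col (Quotient.mk d.rel q.out) := by
  have hq : (comp d (idDiag r k)).col q =
      (∏ᶠ (a) (_ : lead d a ∧ (bigRel d (idDiag r k)).r (ι₁ a) (ιo q.out)),
        d.col (Quotient.mk d.rel a)) *
      (∏ᶠ (c) (_ : lead (idDiag r k) c ∧
          (bigRel d (idDiag r k)).r (ι₂ c) (ιo q.out)), (1 : Cr r)) := rfl
  rw [hq, finprod_cond_one, mul_one]
  have hiff : ∀ a : F2 k,
      (lead d a ∧ (bigRel d (idDiag r k)).r (ι₁ a) (ιo q.out)) ↔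
        a = leadOf d q.out := by
    intro a
    have hcond : (bigRel d (idDiag r k)).r (ι₁ a) (ιo q.out) ↔
        d.rel.r a q.out := by
      rw [rel_iff_left _ (bridgeR d a)]
      exact (relIdR d a q.out).symm.symm
    rw [hcond]
    constructor
    · rintro ⟨hl, hr⟩
      exact lead_unique hl (leadOf_lead d q.out)
        (d.rel.iseqv.trans hr (d.rel.iseqv.symm (leadOf_rel d q.out)))
    · rintro rfl
      exact ⟨leadOf_lead d q.out, leadOf_rel d q.out⟩
  rw [finprod_cond_unique _ hiff]
  exact congrArg d.col (mk_eq_of_rel _ (leadOf_rel d q.out))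

lemma comp_idR : comp d (idDiag r k) = d := by
  have hrel : (comp d (idDiag r k)).rel = d.rel :=
    Setoid.ext fun x y => relIdR d x y
  refine CDiag.ext' hrel fun a => ?_
  rw [colIdR]
  exact congrArg d.col (mk_eq_of_rel _
    ((relIdR d _ _).mp (out_rel (comp d (idDiag r k)).rel a)))

/-! ### Left identity -/

def PhiIdL : V3 k → Quotient d.rel
  | .inl a => Quotient.mk _ (.inl a)
  | .inr (.inl b) => Quotient.mk _ (.inl b)
  | .inr (.inr c) => Quotient.mk _ (.inr c)

lemma BidL_le_ker : bigRel (idDiag r k) d ≤ Setoid.ker (PhiIdL d) := by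
  refine sup_le (push_le fun a b h => ?_) (push_le fun a b h => ?_)
  · have hker : (idDiag r k).rel ≤ Setoid.ker (fun x : F2 k => PhiIdL d (ι₁ x)) :=
      Setoid.eqvGen_le (by rintro x y ⟨i, rfl, rfl⟩; rfl)
    exact rel_of_le hker h
  · have key : ∀ x : F2 k, PhiIdL d (ι₂ x) = Quotient.mk d.rel x := by
      rintro (a | b) <;> rfl
    show PhiIdL d (ι₂ a) = PhiIdL d (ι₂ b)
    rw [key, key]; exact mk_eq_of_rel _ h

lemma bridgeL (x : F2 k) : (bigRel (idDiag r k) d).r (ι₂ x) (ιo x) := by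
  rcases x with b | c
  · exact (bigRel (idDiag r k) d).iseqv.symm
      (rel_of_le le_sup_left (push_rel_of ι₁ (idDiag r k).rel (id_rel b)))
  · exact (bigRel (idDiag r k) d).iseqv.refl _

lemma relIdL (x y : F2 k) :
    (comp (idDiag r k) d).rel.r x y ↔ d.rel.r x y := by
  have h0 : (comp (idDiag r k) d).rel.r x y ↔
      (bigRel (idDiag r k) d).r (ιo x) (ιo y) := Iff.rfl
  rw [h0]
  constructor
  · intro h
    have := rel_of_le (BidL_le_ker d) h
    have key : ∀ z : F2 k, PhiIdL d (ιo z) = Quotient.mk d.rel z := by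
      rintro (a | c) <;> rfl
    rw [Setoid.ker_def, key, key] at this
    exact Quotient.exact this
  · intro h
    have h1 := (bigRel (idDiag r k) d).iseqv.symm (bridgeL d x)
    have h2 : (bigRel (idDiag r k) d).r (ι₂ x) (ι₂ y) :=
      rel_of_le le_sup_right (push_rel_of ι₂ d.rel h)
    exact (bigRel (idDiag r k) d).iseqv.trans h1
      ((bigRel (idDiag r k) d).iseqv.trans h2 (bridgeL d y))

lemma colIdL (q : Quotient (comp (idDiag r k) d).rel) :
    (comp (idDiag r k) d).col q = d.col (Quotient.mk d.rel q.out) := by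
  have hq : (comp (idDiag r k) d).col q =
      (∏ᶠ (c) (_ : lead (idDiag r k) c ∧
          (bigRel (idDiag r k) d).r (ι₁ c) (ιo q.out)), (1 : Cr r)) *
      (∏ᶠ (a) (_ : lead d a ∧ (bigRel (idDiag r k) d).r (ι₂ a) (ιo q.out)),
        d.col (Quotient.mk d.rel a)) := rfl
  rw [hq, finprod_cond_one, one_mul]
  have hiff : ∀ a : F2 k,
      (lead d a ∧ (bigRel (idDiag r k) d).r (ι₂ a) (ιo q.out)) ↔
        a = leadOf d q.out := by
    intro a
    have hcond : (bigRel (idDiag r k) d).r (ι₂ a) (ιo q.out) ↔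
        d.rel.r a q.out := by
      rw [rel_iff_left _ (bridgeL d a)]
      exact (relIdL d a q.out).symm.symm
    rw [hcond]
    constructor
    · rintro ⟨hl, hr⟩
      exact lead_unique hl (leadOf_lead d q.out)
        (d.rel.iseqv.trans hr (d.rel.iseqv.symm (leadOf_rel d q.out)))
    · rintro rfl
      exact ⟨leadOf_lead d q.out, leadOf_rel d q.out⟩
  rw [finprod_cond_unique _ hiff]
  exact congrArg d.col (mk_eq_of_rel _ (leadOf_rel d q.out))

lemma comp_idL : comp (idDiag r k) d = d := by
  have hrel : (comp (idDiag r k) d).rel = d.rel :=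
    Setoid.ext fun x y => relIdL d x y
  refine CDiag.ext' hrel fun a => ?_
  rw [colIdL]
  exact congrArg d.col (mk_eq_of_rel _
    ((relIdL d _ _).mp (out_rel (comp (idDiag r k) d).rel a)))

end CPM


/-- The colored partition monoid `CPar_k`: composition of colored
`(k,k)`-partition diagrams is associative and the identity diagram is a
two-sided identity. -/
theorem coloredPartitionMonoid (r k : ℕ) :
    (∀ d₁ d₂ d₃ : CDiag r k k, comp (comp d₁ d₂) d₃ = comp d₁ (comp d₂ d₃)) ∧
    (∀ d : CDiag r k k, comp d (idDiag r k) = d ∧ comp (idDiag r k) d = d) :=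
  ⟨fun d₁ d₂ d₃ => CPM.comp_assoc d₁ d₂ d₃,
   fun d => ⟨CPM.comp_idR d, CPM.comp_idL d⟩⟩
end

section
/- In the colored partition monoid CPar_k, two colored partition diagrams d and d' are in the same Green's J-class (i.e., CPar_k · d · CPar_k = CPar_k · d' · CPar_k) if and only if d and d' have the same rank, where the rank of a colored partition diagram is its number of propagating parts (parts intersecting both the top row {1,...,k} and the bottom row {1',...,k'}). -/
open Relation

open CDiag

/-!
Distinct propagating blocks of a product `d₁ · d₂` meet distinct propagating blocks of `d₁` in
the top row and of `d₂` in the bottom row, so `rn (a · d · b) ≤ rn d`. Conversely, if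
`rn x ≤ rn d`, fix an injection `φ` from the propagating blocks of `x` into those of `d` and label
the vertices of `d` and `x` by blocks, a propagating block `Q` of `x` sharing its label with
`φ Q`. The diagrams `a`, `b` whose blocks are the label classes of the relevant rows then satisfy
`a · d · b = x` as set partitions, and their colours can be chosen so that the colours agree too:
`a` cancels the colour of `φ Q` and supplies that of `Q`. So the principal two-sided ideal of `d`
is `{x | rn x ≤ rn d}`, and two such ideals coincide exactly when the ranks agree.
-/

namespace CDiag

open Function

variable {r k l m k' l' : ℕ}

section ThreeRows

variable (d₁ : CDiag r k l) (d₂ : CDiag r l m)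

lemma ι₁_injective : Injective (ι₁ : Fin k ⊕ Fin l → Fin k ⊕ (Fin l ⊕ Fin m)) :=
  Sum.map_injective.2 ⟨injective_id, Sum.inl_injective⟩

lemma bigRel_le_ker {U : Type*} {F : Fin k ⊕ (Fin l ⊕ Fin m) → U}
    (h₁ : ∀ u v, d₁.rel u v → F (ι₁ u) = F (ι₁ v))
    (h₂ : ∀ u v, d₂.rel u v → F (ι₂ u) = F (ι₂ v)) :
    bigRel d₁ d₂ ≤ Setoid.ker F :=
  sup_le (Setoid.eqvGen_le fun _ _ ⟨u, v, huv, hx, hy⟩ => hx ▸ hy ▸ h₁ u v huv)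
    (Setoid.eqvGen_le fun _ _ ⟨u, v, huv, hx, hy⟩ => hx ▸ hy ▸ h₂ u v huv)

variable {d₁ d₂}

lemma bigRel_of_rel₁ {u v : Fin k ⊕ Fin l} (h : d₁.rel u v) :
    bigRel d₁ d₂ (ι₁ u) (ι₁ v) :=
  Setoid.le_def.1 le_sup_left (Relation.EqvGen.rel _ _ ⟨u, v, h, rfl, rfl⟩)

lemma bigRel_of_rel₂ {u v : Fin l ⊕ Fin m} (h : d₂.rel u v) :
    bigRel d₁ d₂ (ι₂ u) (ι₂ v) :=
  Setoid.le_def.1 le_sup_right (Relation.EqvGen.rel _ _ ⟨u, v, h, rfl, rfl⟩)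

-- If the `d₁`-block of `inl i` missed the middle row, its image would be a union of blocks of
-- `bigRel d₁ d₂` containing no bottom vertex.
lemma exists_rel_mid_of_comp_rel_top {i : Fin k} {j : Fin m}
    (h : (comp d₁ d₂).rel (.inl i) (.inr j)) : ∃ j', d₁.rel (.inl i) (.inr j') := by
  by_contra! hmid
  let S : Fin k ⊕ (Fin l ⊕ Fin m) → Prop := fun z => ∃ v, z = ι₁ v ∧ d₁.rel (.inl i) v
  have hS : bigRel d₁ d₂ ≤ Setoid.ker S := by
    refine bigRel_le_ker d₁ d₂ (fun u v huv => propext ?_) (fun u v _ => propext ?_)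
    · constructor <;> rintro ⟨w, hw, hiw⟩ <;> obtain rfl := ι₁_injective hw
      exacts [⟨v, rfl, d₁.rel.trans hiw huv⟩, ⟨u, rfl, d₁.rel.trans hiw (d₁.rel.symm huv)⟩]
    · suffices ∀ w, ¬ S (ι₂ w) by simp only [this]
      rintro (j' | j') ⟨(_ | _) | _, hw, hiw⟩ <;> simp_all [ι₁, ι₂]
  obtain ⟨_ | _, hw, -⟩ : S (ιo (.inr j)) :=
    (Setoid.ker_def.1 (Setoid.le_def.1 hS h)).mp ⟨.inl i, rfl, d₁.rel.refl _⟩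
  all_goals simp [ι₁, ιo] at hw

lemma exists_rel_mid_of_comp_rel_bot {i : Fin k} {j : Fin m}
    (h : (comp d₁ d₂).rel (.inl i) (.inr j)) : ∃ j', d₂.rel (.inl j') (.inr j) := by
  by_contra! hmid
  let S : Fin k ⊕ (Fin l ⊕ Fin m) → Prop := fun z => ∃ v, z = ι₂ v ∧ d₂.rel v (.inr j)
  have hS : bigRel d₁ d₂ ≤ Setoid.ker S := by
    refine bigRel_le_ker d₁ d₂ (fun u v _ => propext ?_) (fun u v huv => propext ?_)
    · suffices ∀ w, ¬ S (ι₁ w) by simp only [this]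
      rintro (i' | j') ⟨_ | _, hw, hwj⟩ <;> simp_all [ι₁, ι₂]
    · constructor <;> rintro ⟨w, hw, hwj⟩ <;> obtain rfl := Sum.inr_injective hw
      exacts [⟨v, rfl, d₂.rel.trans (d₂.rel.symm huv) hwj⟩, ⟨u, rfl, d₂.rel.trans huv hwj⟩]
  obtain ⟨_ | _, hw, -⟩ : S (ιo (.inl i)) :=
    (Setoid.ker_def.1 (Setoid.le_def.1 hS h)).mpr ⟨.inr j, rfl, d₂.rel.refl _⟩
  all_goals simp [ι₂, ιo] at hw

end ThreeRows

section Rank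

abbrev PropBlock (d : CDiag r k l) := {q : Quotient d.rel // Propagating d q}

lemma rn_le_of_top_row {e : CDiag r k m} {d : CDiag r k l}
    (hle : ∀ i i', d.rel (.inl i) (.inl i') → e.rel (.inl i) (.inl i'))
    (hmid : ∀ i j, e.rel (.inl i) (.inr j) → ∃ j', d.rel (.inl i) (.inr j')) :
    rn e ≤ rn d := by
  choose top htop using fun q : PropBlock e => q.2.1
  have hprop (q : PropBlock e) : Propagating d ⟦.inl (top q)⟧ := by
    obtain ⟨j, hj⟩ := q.2.2
    obtain ⟨j', hj'⟩ := hmid _ j (Quotient.exact ((htop q).trans hj.symm))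
    exact ⟨⟨top q, rfl⟩, ⟨j', Quotient.sound (d.rel.symm hj')⟩⟩
  refine Nat.card_le_card_of_injective (fun q => ⟨_, hprop q⟩) fun q q' hqq' => ?_
  have hd : d.rel (.inl (top q)) (.inl (top q')) := Quotient.exact (congrArg Subtype.val hqq')
  exact Subtype.ext ((htop q).symm.trans ((Quotient.sound (hle _ _ hd)).trans (htop q')))

lemma rn_le_of_bottom_row {e : CDiag r m l} {d : CDiag r k l}
    (hle : ∀ j j', d.rel (.inr j) (.inr j') → e.rel (.inr j) (.inr j'))
    (hmid : ∀ i j, e.rel (.inl i) (.inr j) → ∃ i', d.rel (.inl i') (.inr j)) :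
    rn e ≤ rn d := by
  choose bot hbot using fun q : PropBlock e => q.2.2
  have hprop (q : PropBlock e) : Propagating d ⟦.inr (bot q)⟧ := by
    obtain ⟨i, hi⟩ := q.2.1
    obtain ⟨i', hi'⟩ := hmid i _ (Quotient.exact (hi.trans (hbot q).symm))
    exact ⟨⟨i', Quotient.sound hi'⟩, ⟨bot q, rfl⟩⟩
  refine Nat.card_le_card_of_injective (fun q => ⟨_, hprop q⟩) fun q q' hqq' => ?_
  have hd : d.rel (.inr (bot q)) (.inr (bot q')) := Quotient.exact (congrArg Subtype.val hqq')
  exact Subtype.ext ((hbot q).symm.trans ((Quotient.sound (hle _ _ hd)).trans (hbot q')))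

lemma rn_comp_le_left (d₁ : CDiag r k l) (d₂ : CDiag r l m) : rn (comp d₁ d₂) ≤ rn d₁ :=
  rn_le_of_top_row (fun _ _ => bigRel_of_rel₁) fun _ _ => exists_rel_mid_of_comp_rel_top

lemma rn_comp_le_right (d₁ : CDiag r k l) (d₂ : CDiag r l m) : rn (comp d₁ d₂) ≤ rn d₂ :=
  rn_le_of_bottom_row (fun _ _ => bigRel_of_rel₂) fun _ _ => exists_rel_mid_of_comp_rel_bot

end Rank

lemma ext_of_col_mk {d e : CDiag r k l} (hrel : d.rel = e.rel)
    (hcol : ∀ u, d.col ⟦u⟧ = e.col ⟦u⟧) : d = e := by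
  obtain ⟨s, c⟩ := d
  obtain ⟨s', c'⟩ := e
  obtain rfl : s = s' := hrel
  congr
  funext q
  induction q using Quotient.ind
  exact hcol _

section Lead

variable (d : CDiag r k l)

lemma pos_injective : Injective (pos : Fin k ⊕ Fin l → ℕ) := by
  have : (pos : Fin k ⊕ Fin l → ℕ) = fun a => (finSumFinEquiv a : ℕ) := by
    funext a; cases a <;> simp [pos]
  exact this ▸ Fin.val_injective.comp finSumFinEquiv.injective

lemma exists_lead (v : Fin k ⊕ Fin l) : ∃ a, d.rel v a ∧ lead d a := by
  classical
  obtain ⟨a, ha, hmin⟩ :=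
    Finset.exists_min_image (Finset.univ.filter (d.rel v)) pos ⟨v, by simp⟩
  simp only [Finset.mem_filter, Finset.mem_univ, true_and] at ha hmin
  exact ⟨a, ha, fun b hab => hmin b (d.rel.trans ha hab)⟩

lemma lead_unique {a b : Fin k ⊕ Fin l} (ha : lead d a) (hb : lead d b) (hab : d.rel a b) :
    a = b :=
  pos_injective (le_antisymm (ha b hab) (hb a (d.rel.symm hab)))

end Lead

section Labelling

variable {T : Type*}

def IsLabelling (d : CDiag r k l) (f : Fin k ⊕ Fin l → T) : Prop :=
  ∀ a b, d.rel a b ↔ f a = f b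

lemma isLabelling_comp_mk (d : CDiag r k l) {g : Quotient d.rel → T} (hg : Injective g) :
    IsLabelling d (g ∘ Quotient.mk d.rel) :=
  fun _ _ => ⟨fun h => congrArg g (Quotient.sound h), fun h => Quotient.exact (hg h)⟩

lemma IsLabelling.rel_eq {d e : CDiag r k l} {f : Fin k ⊕ Fin l → T} (hd : IsLabelling d f)
    (he : IsLabelling e f) : d.rel = e.rel :=
  Setoid.ext fun a b => (hd a b).trans (he a b).symm

noncomputable def ofLabel (f : Fin k ⊕ Fin l → T) (c : T → Cr r) : CDiag r k l :=
  ⟨Setoid.ker f, fun q => c (f q.out)⟩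

lemma isLabelling_ofLabel (f : Fin k ⊕ Fin l → T) (c : T → Cr r) :
    IsLabelling (ofLabel f c) f :=
  fun _ _ => Iff.rfl

-- The colour of the block of `d` labelled `t`, or `1` if there is none, written in the
-- shape in which `comp` colours its blocks.
noncomputable def labelCol (d : CDiag r k l) (f : Fin k ⊕ Fin l → T) (t : T) : Cr r :=
  ∏ᶠ (a) (_ : lead d a ∧ f a = t), d.col ⟦a⟧

lemma labelCol_apply {d : CDiag r k l} {f : Fin k ⊕ Fin l → T} (hf : IsLabelling d f)
    {v : Fin k ⊕ Fin l} {t : T} (hv : f v = t) : labelCol d f t = d.col ⟦v⟧ := by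
  obtain ⟨a, hva, ha⟩ := exists_lead d v
  have hset : {b | lead d b ∧ f b = t} = {a} := by
    ext b
    refine ⟨fun ⟨hb, hbt⟩ => lead_unique d hb ha ((hf b a).2 (hbt.trans (hv ▸ (hf v a).1 hva))),
      fun hb => ?_⟩
    rw [Set.mem_singleton_iff.1 hb]
    exact ⟨ha, hv ▸ ((hf v a).1 hva).symm⟩
  change ∏ᶠ b ∈ {b | lead d b ∧ f b = t}, d.col ⟦b⟧ = _
  rw [hset, finprod_mem_singleton]
  exact congrArg d.col (Quotient.sound (d.rel.symm hva))

lemma labelCol_eq_one {d : CDiag r k l} {f : Fin k ⊕ Fin l → T} {t : T} (ht : ∀ v, f v ≠ t) :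
    labelCol d f t = 1 := by
  have hset : {b | lead d b ∧ f b = t} = ∅ := by
    ext b
    simp [ht b]
  change ∏ᶠ b ∈ {b | lead d b ∧ f b = t}, d.col ⟦b⟧ = _
  rw [hset, finprod_mem_empty]

lemma labelCol_ofLabel {f : Fin k ⊕ Fin l → T} {c : T → Cr r} {v : Fin k ⊕ Fin l} {t : T}
    (hv : f v = t) : labelCol (ofLabel f c) f t = c t := by
  rw [labelCol_apply (isLabelling_ofLabel f c) hv, ← hv]
  exact congrArg c (Quotient.mk_out (s := Setoid.ker f) v)

end Labelling

section Composition

variable {T : Type*}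

def glue (f₁ : Fin k ⊕ Fin l → T) (f₂ : Fin l ⊕ Fin m → T) : Fin k ⊕ (Fin l ⊕ Fin m) → T :=
  Sum.elim (f₁ ∘ Sum.inl) f₂

-- The `link` condition makes every label shared by the top row of `d₁` and the bottom row of
-- `d₂` pass through the middle row, so the blocks of the stacked diagram are the label classes.
structure CompLabelling (d₁ : CDiag r k l) (d₂ : CDiag r l m) (f₁ : Fin k ⊕ Fin l → T)
    (f₂ : Fin l ⊕ Fin m → T) : Prop where
  isLabelling₁ : IsLabelling d₁ f₁
  isLabelling₂ : IsLabelling d₂ f₂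
  mid : ∀ j, f₁ (.inr j) = f₂ (.inl j)
  link : ∀ i j, f₁ (.inl i) = f₂ (.inr j) → ∃ j', f₁ (.inr j') = f₁ (.inl i)

namespace CompLabelling

variable {d₁ : CDiag r k l} {d₂ : CDiag r l m} {f₁ : Fin k ⊕ Fin l → T}
  {f₂ : Fin l ⊕ Fin m → T}

lemma glue_ι₁ (h : CompLabelling d₁ d₂ f₁ f₂) (u : Fin k ⊕ Fin l) :
    glue f₁ f₂ (ι₁ u) = f₁ u := by
  cases u
  exacts [rfl, (h.mid _).symm]

lemma bigRel_iff (h : CompLabelling d₁ d₂ f₁ f₂) (x y : Fin k ⊕ (Fin l ⊕ Fin m)) :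
    bigRel d₁ d₂ x y ↔ glue f₁ f₂ x = glue f₁ f₂ y := by
  refine ⟨fun hxy => Setoid.ker_def.1 (Setoid.le_def.1 (bigRel_le_ker d₁ d₂ ?_ ?_) hxy), ?_⟩
  · exact fun u v huv => by rw [h.glue_ι₁, h.glue_ι₁]; exact (h.isLabelling₁ u v).1 huv
  · exact fun u v huv => (h.isLabelling₂ u v).1 huv
  have same₁ (u v) (huv : f₁ u = f₁ v) : bigRel d₁ d₂ (ι₁ u) (ι₁ v) :=
    bigRel_of_rel₁ ((h.isLabelling₁ u v).2 huv)
  have same₂ (u v) (huv : f₂ u = f₂ v) : bigRel d₁ d₂ (ι₂ u) (ι₂ v) :=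
    bigRel_of_rel₂ ((h.isLabelling₂ u v).2 huv)
  have cross (i j) (hij : f₁ (.inl i) = f₂ (.inr j)) :
      bigRel d₁ d₂ (.inl i) (.inr (.inr j)) := by
    obtain ⟨j', hj'⟩ := h.link i j hij
    exact (bigRel d₁ d₂).trans (same₁ (.inl i) (.inr j') hj'.symm)
      (same₂ (.inl j') (.inr j) ((h.mid j').symm.trans (hj'.trans hij)))
  rcases x with i | j | j <;> rcases y with i' | j' | j' <;> intro hxy
  · exact same₁ (.inl i) (.inl i') hxy
  · exact same₁ (.inl i) (.inr j') (hxy.trans (h.mid j').symm)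
  · exact cross i j' hxy
  · exact same₁ (.inr j) (.inl i') ((h.mid j).trans hxy)
  · exact same₂ (.inl j) (.inl j') hxy
  · exact same₂ (.inl j) (.inr j') hxy
  · exact (bigRel d₁ d₂).symm (cross i' j hxy.symm)
  · exact same₂ (.inr j) (.inl j') hxy
  · exact same₂ (.inr j) (.inr j') hxy

lemma isLabelling_comp (h : CompLabelling d₁ d₂ f₁ f₂) :
    IsLabelling (comp d₁ d₂) (glue f₁ f₂ ∘ ιo) :=
  fun u v => h.bigRel_iff (ιo u) (ιo v)

lemma comp_col_mk (h : CompLabelling d₁ d₂ f₁ f₂) (u : Fin k ⊕ Fin m) :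
    (comp d₁ d₂).col ⟦u⟧ =
      labelCol d₁ f₁ ((glue f₁ f₂ ∘ ιo) u) * labelCol d₂ f₂ ((glue f₁ f₂ ∘ ιo) u) := by
  have hout : glue f₁ f₂ (ιo (⟦u⟧ : Quotient (comp d₁ d₂).rel).out) = glue f₁ f₂ (ιo u) :=
    h.isLabelling_comp _ _ |>.1 (Quotient.mk_out u)
  refine congrArg₂ (· * ·)
    (finprod_congr fun a => finprod_congr_Prop (propext (and_congr_right fun _ => ?_)) fun _ => rfl)
    (finprod_congr fun a => finprod_congr_Prop (propext (and_congr_right fun _ => ?_)) fun _ => rfl)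
  · rw [h.bigRel_iff, h.glue_ι₁]
    exact ⟨(·.trans hout), (·.trans hout.symm)⟩
  · rw [h.bigRel_iff]
    exact ⟨(·.trans hout), (·.trans hout.symm)⟩

end CompLabelling

end Composition

section Factorization

variable {d : CDiag r k l} {x : CDiag r k' l'} (φ : PropBlock x ↪ PropBlock d)

-- A propagating block `Q` of `x` is labelled by the block `φ Q` of `d`; every other block of
-- `x`, and every block of `d`, is labelled by itself.
open Classical in
noncomputable def blockLabel (B : Quotient x.rel) : Quotient d.rel ⊕ Quotient x.rel :=
  if h : Propagating x B then .inl (φ ⟨B, h⟩).1 else .inr B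

lemma blockLabel_of_propagating (Q : PropBlock x) : blockLabel φ Q.1 = .inl (φ Q).1 :=
  dif_pos Q.2

lemma blockLabel_of_not_propagating {B : Quotient x.rel} (hB : ¬ Propagating x B) :
    blockLabel φ B = .inr B :=
  dif_neg hB

lemma exists_of_blockLabel_eq_inl {B : Quotient x.rel} {P : Quotient d.rel}
    (h : blockLabel φ B = .inl P) : ∃ Q : PropBlock x, Q.1 = B ∧ (φ Q).1 = P := by
  by_cases hB : Propagating x B
  · exact ⟨⟨B, hB⟩, rfl, Sum.inl_injective ((blockLabel_of_propagating φ ⟨B, hB⟩).symm.trans h)⟩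
  · simp [blockLabel_of_not_propagating φ hB] at h

lemma eq_of_blockLabel_eq_inr {B B' : Quotient x.rel} (h : blockLabel φ B = .inr B') :
    B = B' := by
  by_cases hB : Propagating x B
  · simp [blockLabel_of_propagating φ ⟨B, hB⟩] at h
  · exact Sum.inr_injective ((blockLabel_of_not_propagating φ hB).symm.trans h)

lemma blockLabel_injective : Injective (blockLabel φ) := by
  intro B B' h
  cases hB' : blockLabel φ B' with
  | inl P =>
    obtain ⟨Q, rfl, hQ⟩ := exists_of_blockLabel_eq_inl φ (h.trans hB')
    obtain ⟨Q', rfl, hQ'⟩ := exists_of_blockLabel_eq_inl φ hB'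
    exact congrArg Subtype.val (φ.injective (Subtype.ext (hQ.trans hQ'.symm)))
  | inr B'' =>
    exact (eq_of_blockLabel_eq_inr φ (h.trans hB')).trans (eq_of_blockLabel_eq_inr φ hB').symm

variable (d x) in
def dLabel : Fin k ⊕ Fin l → Quotient d.rel ⊕ Quotient x.rel :=
  Sum.inl ∘ Quotient.mk d.rel

noncomputable def xLabel : Fin k' ⊕ Fin l' → Quotient d.rel ⊕ Quotient x.rel :=
  blockLabel φ ∘ Quotient.mk x.rel

noncomputable def rightLabel : Fin l ⊕ Fin l' → Quotient d.rel ⊕ Quotient x.rel :=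
  Sum.elim (dLabel d x ∘ .inr) (xLabel φ ∘ .inr)

noncomputable def midLabel : Fin k ⊕ Fin l' → Quotient d.rel ⊕ Quotient x.rel :=
  Sum.elim (dLabel d x ∘ .inl) (xLabel φ ∘ .inr)

noncomputable def leftLabel : Fin k' ⊕ Fin k → Quotient d.rel ⊕ Quotient x.rel :=
  Sum.elim (xLabel φ ∘ .inl) (dLabel d x ∘ .inl)

noncomputable def rightFactor : CDiag r l l' :=
  ofLabel (rightLabel φ) (Sum.elim 1 x.col)

-- The block of `x` through a propagating `Q` gets `x.col Q` from this factor once the colour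
-- of `φ Q` in `d` is cancelled; every other block of `x` is coloured by the factor carrying it.
noncomputable def leftFactor : CDiag r k' k :=
  ofLabel (leftLabel φ) (Sum.elim (fun P => labelCol x (xLabel φ) (.inl P) * (d.col P)⁻¹) x.col)

lemma isLabelling_dLabel : IsLabelling d (dLabel d x) :=
  isLabelling_comp_mk d Sum.inl_injective

lemma isLabelling_xLabel : IsLabelling x (xLabel φ) :=
  isLabelling_comp_mk x (blockLabel_injective φ)

lemma compLabelling_rightFactor :
    CompLabelling d (rightFactor φ) (dLabel d x) (rightLabel φ) where
  isLabelling₁ := isLabelling_dLabel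
  isLabelling₂ := isLabelling_ofLabel _ _
  mid _ := rfl
  link i j hij := by
    obtain ⟨Q, -, hQ⟩ := exists_of_blockLabel_eq_inl φ hij.symm
    obtain ⟨-, j', hj'⟩ := (φ Q).2
    exact ⟨j', congrArg Sum.inl (hj'.trans hQ)⟩

lemma glue_rightLabel : glue (dLabel d x) (rightLabel φ) ∘ ιo = midLabel φ := by
  funext u; cases u <;> rfl

lemma isLabelling_comp_rightFactor : IsLabelling (comp d (rightFactor φ)) (midLabel φ) :=
  glue_rightLabel φ ▸ (compLabelling_rightFactor φ).isLabelling_comp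

lemma col_comp_rightFactor_mk (w : Fin k ⊕ Fin l') :
    (comp d (rightFactor φ)).col ⟦w⟧ =
      labelCol d (dLabel d x) (midLabel φ w) *
        labelCol (rightFactor φ) (rightLabel φ) (midLabel φ w) := by
  rw [(compLabelling_rightFactor φ).comp_col_mk, glue_rightLabel]

lemma compLabelling_leftFactor :
    CompLabelling (leftFactor φ) (comp d (rightFactor φ)) (leftLabel φ) (midLabel φ) where
  isLabelling₁ := isLabelling_ofLabel _ _
  isLabelling₂ := isLabelling_comp_rightFactor φ
  mid _ := rfl
  link i j hij := by
    have hx : (⟦.inl i⟧ : Quotient x.rel) = ⟦.inr j⟧ := blockLabel_injective φ hij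
    let Q : PropBlock x := ⟨⟦.inr j⟧, ⟨i, hx⟩, ⟨j, rfl⟩⟩
    obtain ⟨⟨i', hi'⟩, -⟩ := (φ Q).2
    refine ⟨i', ?_⟩
    change Sum.inl _ = blockLabel φ ⟦.inl i⟧
    rw [hx, hi']
    exact (blockLabel_of_propagating φ Q).symm

lemma glue_leftLabel : glue (leftLabel φ) (midLabel φ) ∘ ιo = xLabel φ := by
  funext u; cases u <;> rfl

lemma col_factor_mk_of_propagating {u : Fin k' ⊕ Fin l'} (hu : Propagating x ⟦u⟧) :
    (comp (leftFactor φ) (comp d (rightFactor φ))).col ⟦u⟧ = x.col ⟦u⟧ := by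
  let Q : PropBlock x := ⟨⟦u⟧, hu⟩
  have hc : xLabel φ u = .inl (φ Q).1 := blockLabel_of_propagating φ Q
  obtain ⟨i, hi⟩ := hu.1
  obtain ⟨⟨i', hi'⟩, ⟨j', hj'⟩⟩ := (φ Q).2
  have hleft : leftLabel φ (.inl i) = .inl (φ Q).1 := (congrArg (blockLabel φ) hi).trans hc
  have hmid : midLabel φ (.inl i') = .inl (φ Q).1 := congrArg Sum.inl hi'
  have hright : rightLabel φ (.inl j') = .inl (φ Q).1 := congrArg Sum.inl hj'
  rw [(compLabelling_leftFactor φ).comp_col_mk, glue_leftLabel, hc, leftFactor,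
    labelCol_ofLabel hleft, labelCol_apply (isLabelling_comp_rightFactor φ) hmid,
    col_comp_rightFactor_mk, hmid, labelCol_apply isLabelling_dLabel (hmid : dLabel d x _ = _),
    rightFactor, labelCol_ofLabel hright]
  simp only [Sum.elim_inl, labelCol_apply (isLabelling_xLabel φ) hc, hi', Pi.one_apply, mul_one,
    inv_mul_cancel_right]

lemma col_factor_mk_of_not_propagating {u : Fin k' ⊕ Fin l'} (hu : ¬ Propagating x ⟦u⟧) :
    (comp (leftFactor φ) (comp d (rightFactor φ))).col ⟦u⟧ = x.col ⟦u⟧ := by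
  have hc : xLabel φ u = .inr ⟦u⟧ := blockLabel_of_not_propagating φ hu
  have hblock {w} (hw : xLabel φ w = .inr ⟦u⟧) : ⟦w⟧ = ⟦u⟧ := eq_of_blockLabel_eq_inr φ hw
  rw [(compLabelling_leftFactor φ).comp_col_mk, glue_leftLabel, hc]
  rcases u with i | j
  · rw [leftFactor, labelCol_ofLabel (f := leftLabel φ) (v := .inl i) hc, labelCol_eq_one, mul_one]
    · rfl
    rintro (i' | j') h
    · exact Sum.inl_ne_inr h
    · exact hu ⟨⟨i, rfl⟩, ⟨j', hblock h⟩⟩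
  · have hmid : midLabel φ (.inr j) = .inr ⟦.inr j⟧ := hc
    rw [labelCol_eq_one, one_mul, labelCol_apply (isLabelling_comp_rightFactor φ) hmid,
      col_comp_rightFactor_mk, hmid, labelCol_eq_one, one_mul,
      rightFactor, labelCol_ofLabel (f := rightLabel φ) (v := .inr j) hc]
    · rfl
    · exact fun _ h => Sum.inl_ne_inr h
    rintro (i' | i') h
    · exact hu ⟨⟨i', hblock h⟩, ⟨j, rfl⟩⟩
    · exact Sum.inl_ne_inr h

lemma comp_leftFactor_comp_rightFactor : comp (leftFactor φ) (comp d (rightFactor φ)) = x := by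
  refine ext_of_col_mk ?_ fun u => ?_
  · exact (glue_leftLabel φ ▸ (compLabelling_leftFactor φ).isLabelling_comp).rel_eq
      (isLabelling_xLabel φ)
  · by_cases hu : Propagating x ⟦u⟧
    exacts [col_factor_mk_of_propagating φ hu, col_factor_mk_of_not_propagating φ hu]

end Factorization

lemma exists_comp_comp_eq_of_rn_le {d : CDiag r k l} {x : CDiag r k' l'} (h : rn x ≤ rn d) :
    ∃ a b, comp a (comp d b) = x := by
  obtain ⟨φ⟩ : Nonempty (PropBlock x ↪ PropBlock d) := by
    have := Fintype.ofFinite (PropBlock x)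
    have := Fintype.ofFinite (PropBlock d)
    exact Function.Embedding.nonempty_of_card_le
      (by rwa [← Nat.card_eq_fintype_card, ← Nat.card_eq_fintype_card])
  exact ⟨_, _, comp_leftFactor_comp_rightFactor φ⟩

lemma exists_comp_comp_eq_iff_rn_le (d : CDiag r k l) (x : CDiag r k' l') :
    (∃ a b, comp a (comp d b) = x) ↔ rn x ≤ rn d :=
  ⟨fun ⟨a, b, hx⟩ => hx ▸ (rn_comp_le_right a _).trans (rn_comp_le_left d b),
    exists_comp_comp_eq_of_rn_le⟩

end CDiag

/-- Green's J-relation on the colored partition monoid `CPar_k`: two colored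
partition diagrams generate the same two-sided ideal if and only if they have
the same rank (number of propagating parts). -/
theorem coloredPartitionMonoid_J_iff_rank (r k : ℕ) (d d' : CDiag r k k) :
    {x : CDiag r k k | ∃ a b, comp a (comp d b) = x}
      = {x : CDiag r k k | ∃ a b, comp a (comp d' b) = x}
    ↔ rn d = rn d' := by
  simp only [Set.ext_iff, Set.mem_ofPred_eq, exists_comp_comp_eq_iff_rn_le]
  refine ⟨fun h => le_antisymm ((h d).1 le_rfl) ((h d').2 le_rfl), fun h x => by rw [h]⟩
end

section
/- With notation as above, the natural action of the group G = G(r,l) × (G(r,m) × G(r,n))^op on the set X^t_{l,m,n} of colored set-partitions (permuting indices within each of the three index sets and multiplying block colors by the C_r-values of the group elements at the moved indices) is transitive. -/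
/-- A colored block: a subset of `{1,…,l} ⊔ {1',…,m'} ⊔ {1'',…,n''}` with at
most one element from each index set (recorded as options), together with a
color from `C_r`. -/
abbrev Blk (l m n r : ℕ) :=
  (Option (Fin l) × Option (Fin m) × Option (Fin n)) × Cr r

/-- The allowed shapes of blocks: `{j',k''}`, `{i,k''}`, `{i,j'}`, `{i,j',k''}`. -/
def ShapeOK {l m n r : ℕ} (b : Blk l m n r) : Prop :=
  (b.1.1 = none ∧ b.1.2.1.isSome ∧ b.1.2.2.isSome) ∨
  (b.1.1.isSome ∧ b.1.2.1 = none ∧ b.1.2.2.isSome) ∨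
  (b.1.1.isSome ∧ b.1.2.1.isSome ∧ b.1.2.2 = none) ∨
  (b.1.1.isSome ∧ b.1.2.1.isSome ∧ b.1.2.2.isSome)

/-- Membership in `X^t_{l,m,n}`: a set of colored blocks of the allowed shapes,
partitioning the three index sets, with exactly `a` blocks `{j',k''}`, `b`
blocks `{i,k''}`, `c` blocks `{i,j'}` and `t` blocks `{i,j',k''}`. -/
def IsX (l m n r a b c t : ℕ) (x : Finset (Blk l m n r)) : Prop :=
  (∀ bl ∈ x, ShapeOK bl) ∧
  (∀ i : Fin l, ∃! bl : Blk l m n r, bl ∈ x ∧ bl.1.1 = some i) ∧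
  (∀ j : Fin m, ∃! bl : Blk l m n r, bl ∈ x ∧ bl.1.2.1 = some j) ∧
  (∀ kk : Fin n, ∃! bl : Blk l m n r, bl ∈ x ∧ bl.1.2.2 = some kk) ∧
  (x.filter fun bl => bl.1.1 = none).card = a ∧
  (x.filter fun bl => bl.1.2.1 = none).card = b ∧
  (x.filter fun bl => bl.1.2.2 = none).card = c ∧
  (x.filter fun bl => bl.1.1.isSome ∧ bl.1.2.1.isSome ∧ bl.1.2.2.isSome).card = t

/-- The action of `g = ((h₁,σ₁),(h₂,σ₂),(h₃,σ₃)) ∈ G(r,l) × (G(r,m) × G(r,n))ᵒᵖ`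
on a colored block: indices are moved by `σ₁`, `σ₂⁻¹`, `σ₃⁻¹` and the color is
multiplied by `h₁(σ₁ i)·h₂(j')·h₃(k'')` (over the present entries). -/
def actBlock {l m n r : ℕ} (σ₁ : Equiv.Perm (Fin l)) (σ₂ : Equiv.Perm (Fin m))
    (σ₃ : Equiv.Perm (Fin n)) (h₁ : Fin l → Cr r) (h₂ : Fin m → Cr r)
    (h₃ : Fin n → Cr r) (bl : Blk l m n r) : Blk l m n r :=
  ((bl.1.1.map σ₁, bl.1.2.1.map σ₂.symm, bl.1.2.2.map σ₃.symm),
    (bl.1.1.elim 1 fun i => h₁ (σ₁ i)) * (bl.1.2.1.elim 1 h₂) *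
      (bl.1.2.2.elim 1 h₃) * bl.2)

/-- The action of `G(r,l) × (G(r,m) × G(r,n))ᵒᵖ` on colored set-partitions. -/
def actX {l m n r : ℕ} (σ₁ : Equiv.Perm (Fin l)) (σ₂ : Equiv.Perm (Fin m))
    (σ₃ : Equiv.Perm (Fin n)) (h₁ : Fin l → Cr r) (h₂ : Fin m → Cr r)
    (h₃ : Fin n → Cr r) (x : Finset (Blk l m n r)) : Finset (Blk l m n r) :=
  x.image (actBlock σ₁ σ₂ σ₃ h₁ h₂ h₃)

lemma shape_resolve {l m n r : ℕ} {bl : Blk l m n r} (h : ShapeOK bl) :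
    (bl.1.1 = none → (bl.1.2.1 ≠ none ∧ bl.1.2.2 ≠ none)) ∧
    (bl.1.2.1 = none → (bl.1.1 ≠ none ∧ bl.1.2.2 ≠ none)) ∧
    (bl.1.2.2 = none → (bl.1.1 ≠ none ∧ bl.1.2.1 ≠ none)) := by
  rcases h with ⟨h1,h2,h3⟩|⟨h1,h2,h3⟩|⟨h1,h2,h3⟩|⟨h1,h2,h3⟩ <;>
    simp_all [Option.isSome_iff_ne_none]


set_option maxHeartbeats 2000000 in
/-- The natural action of `G = G(r,l) × (G(r,m) × G(r,n))ᵒᵖ` on `X^t_{l,m,n}`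
is transitive. -/
theorem actX_transitive (r l m n a b c t : ℕ) (hr : 0 < r)
    (ha : m + n = l + t + 2 * a) (hb : l + n = m + t + 2 * b)
    (hc : l + m = n + t + 2 * c)
    (x y : Finset (Blk l m n r))
    (hx : IsX l m n r a b c t x) (hy : IsX l m n r a b c t y) :
    ∃ (σ₁ : Equiv.Perm (Fin l)) (σ₂ : Equiv.Perm (Fin m))
      (σ₃ : Equiv.Perm (Fin n)) (h₁ : Fin l → Cr r) (h₂ : Fin m → Cr r)
      (h₃ : Fin n → Cr r), actX σ₁ σ₂ σ₃ h₁ h₂ h₃ x = y := by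
  classical
  obtain ⟨hxS, hxl, hxm, hxn, hxa, hxb, hxc, hxt⟩ := hx
  obtain ⟨hyS, hyl, hym, hyn, hya, hyb, hyc, hyt⟩ := hy
  -- equivalences between corresponding block classes
  have eA : ↥(x.filter fun bl => bl.1.1 = none) ≃ ↥(y.filter fun bl => bl.1.1 = none) :=
    Fintype.equivOfCardEq (by simp [hxa, hya])
  have eB : ↥(x.filter fun bl => bl.1.2.1 = none) ≃ ↥(y.filter fun bl => bl.1.2.1 = none) :=
    Fintype.equivOfCardEq (by simp [hxb, hyb])
  have eC : ↥(x.filter fun bl => bl.1.2.2 = none) ≃ ↥(y.filter fun bl => bl.1.2.2 = none) :=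
    Fintype.equivOfCardEq (by simp [hxc, hyc])
  have eT : ↥(x.filter fun bl => bl.1.1.isSome ∧ bl.1.2.1.isSome ∧ bl.1.2.2.isSome) ≃
      ↥(y.filter fun bl => bl.1.1.isSome ∧ bl.1.2.1.isSome ∧ bl.1.2.2.isSome) :=
    Fintype.equivOfCardEq (by simp [hxt, hyt])
  -- the bijection Φ between x and y
  set Φ : Blk l m n r → Blk l m n r := fun bl =>
    if h : bl ∈ x.filter fun b => b.1.1 = none then (eA ⟨bl, h⟩ : Blk l m n r)
    else if h : bl ∈ x.filter fun b => b.1.2.1 = none then (eB ⟨bl, h⟩ : Blk l m n r)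
    else if h : bl ∈ x.filter fun b => b.1.2.2 = none then (eC ⟨bl, h⟩ : Blk l m n r)
    else if h : bl ∈ x.filter fun b => b.1.1.isSome ∧ b.1.2.1.isSome ∧ b.1.2.2.isSome then
      (eT ⟨bl, h⟩ : Blk l m n r)
    else bl with hΦdef
  have hΦA : ∀ bl (h : bl ∈ x.filter fun b => b.1.1 = none),
      Φ bl = ↑(eA ⟨bl, h⟩) := by
    intro bl h
    simp only [hΦdef]
    rw [dif_pos h]
  have hΦB : ∀ bl (h1 : bl.1.1 ≠ none) (h : bl ∈ x.filter fun b => b.1.2.1 = none),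
      Φ bl = ↑(eB ⟨bl, h⟩) := by
    intro bl h1 h
    have hnA : bl ∉ x.filter fun b => b.1.1 = none :=
      fun hm => h1 (Finset.mem_filter.mp hm).2
    simp only [hΦdef]
    rw [dif_neg hnA, dif_pos h]
  have hΦC : ∀ bl (h1 : bl.1.1 ≠ none) (h2 : bl.1.2.1 ≠ none)
      (h : bl ∈ x.filter fun b => b.1.2.2 = none),
      Φ bl = ↑(eC ⟨bl, h⟩) := by
    intro bl h1 h2 h
    have hnA : bl ∉ x.filter fun b => b.1.1 = none :=
      fun hm => h1 (Finset.mem_filter.mp hm).2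
    have hnB : bl ∉ x.filter fun b => b.1.2.1 = none :=
      fun hm => h2 (Finset.mem_filter.mp hm).2
    simp only [hΦdef]
    rw [dif_neg hnA, dif_neg hnB, dif_pos h]
  have hΦT : ∀ bl (h1 : bl.1.1 ≠ none) (h2 : bl.1.2.1 ≠ none) (h3 : bl.1.2.2 ≠ none)
      (h : bl ∈ x.filter fun b => b.1.1.isSome ∧ b.1.2.1.isSome ∧ b.1.2.2.isSome),
      Φ bl = ↑(eT ⟨bl, h⟩) := by
    intro bl h1 h2 h3 h
    have hnA : bl ∉ x.filter fun b => b.1.1 = none :=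
      fun hm => h1 (Finset.mem_filter.mp hm).2
    have hnB : bl ∉ x.filter fun b => b.1.2.1 = none :=
      fun hm => h2 (Finset.mem_filter.mp hm).2
    have hnC : bl ∉ x.filter fun b => b.1.2.2 = none :=
      fun hm => h3 (Finset.mem_filter.mp hm).2
    simp only [hΦdef]
    rw [dif_neg hnA, dif_neg hnB, dif_neg hnC, dif_pos h]
  -- Φ maps x into y and preserves the shape class
  have hmain : ∀ bl ∈ x, Φ bl ∈ y ∧
      ((Φ bl).1.1 = none ↔ bl.1.1 = none) ∧
      ((Φ bl).1.2.1 = none ↔ bl.1.2.1 = none) ∧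
      ((Φ bl).1.2.2 = none ↔ bl.1.2.2 = none) := by
    intro bl hbl
    rcases hxS bl hbl with ⟨h1, h2, h3⟩ | ⟨h1, h2, h3⟩ | ⟨h1, h2, h3⟩ | ⟨h1, h2, h3⟩
    · have hm : bl ∈ x.filter fun b => b.1.1 = none := Finset.mem_filter.mpr ⟨hbl, h1⟩
      rw [hΦA bl hm]
      have hp := (eA ⟨bl, hm⟩).prop
      rw [Finset.mem_filter] at hp
      obtain ⟨hpy, hp1⟩ := hp
      obtain ⟨q2, q3⟩ := (shape_resolve (hyS _ hpy)).1 hp1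
      have p2 : bl.1.2.1 ≠ none := Option.isSome_iff_ne_none.mp h2
      have p3 : bl.1.2.2 ≠ none := Option.isSome_iff_ne_none.mp h3
      exact ⟨hpy, by simp [hp1, h1], by simp [q2, p2], by simp [q3, p3]⟩
    · have h1' : bl.1.1 ≠ none := Option.isSome_iff_ne_none.mp h1
      have hm : bl ∈ x.filter fun b => b.1.2.1 = none := Finset.mem_filter.mpr ⟨hbl, h2⟩
      rw [hΦB bl h1' hm]
      have hp := (eB ⟨bl, hm⟩).prop
      rw [Finset.mem_filter] at hp
      obtain ⟨hpy, hp2⟩ := hp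
      obtain ⟨q1, q3⟩ := (shape_resolve (hyS _ hpy)).2.1 hp2
      have p3 : bl.1.2.2 ≠ none := Option.isSome_iff_ne_none.mp h3
      exact ⟨hpy, by simp [q1, h1'], by simp [hp2, h2], by simp [q3, p3]⟩
    · have h1' : bl.1.1 ≠ none := Option.isSome_iff_ne_none.mp h1
      have h2' : bl.1.2.1 ≠ none := Option.isSome_iff_ne_none.mp h2
      have hm : bl ∈ x.filter fun b => b.1.2.2 = none := Finset.mem_filter.mpr ⟨hbl, h3⟩
      rw [hΦC bl h1' h2' hm]
      have hp := (eC ⟨bl, hm⟩).prop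
      rw [Finset.mem_filter] at hp
      obtain ⟨hpy, hp3⟩ := hp
      obtain ⟨q1, q2⟩ := (shape_resolve (hyS _ hpy)).2.2 hp3
      exact ⟨hpy, by simp [q1, h1'], by simp [q2, h2'], by simp [hp3, h3]⟩
    · have h1' : bl.1.1 ≠ none := Option.isSome_iff_ne_none.mp h1
      have h2' : bl.1.2.1 ≠ none := Option.isSome_iff_ne_none.mp h2
      have h3' : bl.1.2.2 ≠ none := Option.isSome_iff_ne_none.mp h3
      have hm : bl ∈ x.filter fun b => b.1.1.isSome ∧ b.1.2.1.isSome ∧ b.1.2.2.isSome :=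
        Finset.mem_filter.mpr ⟨hbl, h1, h2, h3⟩
      rw [hΦT bl h1' h2' h3' hm]
      have hp := (eT ⟨bl, hm⟩).prop
      rw [Finset.mem_filter] at hp
      obtain ⟨hpy, q1, q2, q3⟩ := hp
      have q1' : (↑(eT ⟨bl, hm⟩) : Blk l m n r).1.1 ≠ none := Option.isSome_iff_ne_none.mp q1
      have q2' : (↑(eT ⟨bl, hm⟩) : Blk l m n r).1.2.1 ≠ none := Option.isSome_iff_ne_none.mp q2
      have q3' : (↑(eT ⟨bl, hm⟩) : Blk l m n r).1.2.2 ≠ none := Option.isSome_iff_ne_none.mp q3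
      exact ⟨hpy, by simp [q1', h1'], by simp [q2', h2'], by simp [q3', h3']⟩
  -- Φ is injective on x
  have hΦinj : ∀ bl ∈ x, ∀ bl' ∈ x, Φ bl = Φ bl' → bl = bl' := by
    intro bl hbl bl' hbl' heq
    obtain ⟨_, i1, i2, i3⟩ := hmain bl hbl
    obtain ⟨_, j1, j2, j3⟩ := hmain bl' hbl'
    rw [heq] at i1 i2 i3
    rcases hxS bl hbl with ⟨h1, h2, h3⟩ | ⟨h1, h2, h3⟩ | ⟨h1, h2, h3⟩ | ⟨h1, h2, h3⟩
    · have h1' : bl'.1.1 = none := j1.mp (i1.mpr h1)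
      have hm : bl ∈ x.filter fun b => b.1.1 = none := Finset.mem_filter.mpr ⟨hbl, h1⟩
      have hm' : bl' ∈ x.filter fun b => b.1.1 = none := Finset.mem_filter.mpr ⟨hbl', h1'⟩
      rw [hΦA bl hm, hΦA bl' hm'] at heq
      exact congrArg Subtype.val (eA.injective (Subtype.ext heq))
    · have h2' : bl'.1.2.1 = none := j2.mp (i2.mpr h2)
      have hn1 : bl.1.1 ≠ none := Option.isSome_iff_ne_none.mp h1
      have hn1' : bl'.1.1 ≠ none := ((shape_resolve (hxS bl' hbl')).2.1 h2').1
      have hm : bl ∈ x.filter fun b => b.1.2.1 = none := Finset.mem_filter.mpr ⟨hbl, h2⟩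
      have hm' : bl' ∈ x.filter fun b => b.1.2.1 = none := Finset.mem_filter.mpr ⟨hbl', h2'⟩
      rw [hΦB bl hn1 hm, hΦB bl' hn1' hm'] at heq
      exact congrArg Subtype.val (eB.injective (Subtype.ext heq))
    · have h3' : bl'.1.2.2 = none := j3.mp (i3.mpr h3)
      have hn1 : bl.1.1 ≠ none := Option.isSome_iff_ne_none.mp h1
      have hn2 : bl.1.2.1 ≠ none := Option.isSome_iff_ne_none.mp h2
      have hn1' : bl'.1.1 ≠ none := ((shape_resolve (hxS bl' hbl')).2.2 h3').1
      have hn2' : bl'.1.2.1 ≠ none := ((shape_resolve (hxS bl' hbl')).2.2 h3').2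
      have hm : bl ∈ x.filter fun b => b.1.2.2 = none := Finset.mem_filter.mpr ⟨hbl, h3⟩
      have hm' : bl' ∈ x.filter fun b => b.1.2.2 = none := Finset.mem_filter.mpr ⟨hbl', h3'⟩
      rw [hΦC bl hn1 hn2 hm, hΦC bl' hn1' hn2' hm'] at heq
      exact congrArg Subtype.val (eC.injective (Subtype.ext heq))
    · have hn1 : bl.1.1 ≠ none := Option.isSome_iff_ne_none.mp h1
      have hn2 : bl.1.2.1 ≠ none := Option.isSome_iff_ne_none.mp h2
      have hn3 : bl.1.2.2 ≠ none := Option.isSome_iff_ne_none.mp h3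
      have hn1' : bl'.1.1 ≠ none := fun h => hn1 (i1.mp (j1.mpr h))
      have hn2' : bl'.1.2.1 ≠ none := fun h => hn2 (i2.mp (j2.mpr h))
      have hn3' : bl'.1.2.2 ≠ none := fun h => hn3 (i3.mp (j3.mpr h))
      have hm : bl ∈ x.filter fun b => b.1.1.isSome ∧ b.1.2.1.isSome ∧ b.1.2.2.isSome :=
        Finset.mem_filter.mpr ⟨hbl, h1, h2, h3⟩
      have hm' : bl' ∈ x.filter fun b => b.1.1.isSome ∧ b.1.2.1.isSome ∧ b.1.2.2.isSome :=
        Finset.mem_filter.mpr ⟨hbl', Option.isSome_iff_ne_none.mpr hn1',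
          Option.isSome_iff_ne_none.mpr hn2', Option.isSome_iff_ne_none.mpr hn3'⟩
      rw [hΦT bl hn1 hn2 hn3 hm, hΦT bl' hn1' hn2' hn3' hm'] at heq
      exact congrArg Subtype.val (eT.injective (Subtype.ext heq))
  -- Φ maps x onto y
  have himg : x.image Φ = y := by
    apply Finset.Subset.antisymm
    · intro b' hb'
      obtain ⟨bl, hbl, rfl⟩ := Finset.mem_image.mp hb'
      exact (hmain bl hbl).1
    · intro b' hb'
      apply Finset.mem_image.mpr
      rcases hyS b' hb' with ⟨h1, h2, h3⟩ | ⟨h1, h2, h3⟩ | ⟨h1, h2, h3⟩ | ⟨h1, h2, h3⟩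
      · have hm' : b' ∈ y.filter fun bl => bl.1.1 = none := Finset.mem_filter.mpr ⟨hb', h1⟩
        refine ⟨↑(eA.symm ⟨b', hm'⟩), (Finset.mem_filter.mp (eA.symm ⟨b', hm'⟩).prop).1, ?_⟩
        rw [hΦA _ (eA.symm ⟨b', hm'⟩).prop]
        simp
      · have hm' : b' ∈ y.filter fun bl => bl.1.2.1 = none := Finset.mem_filter.mpr ⟨hb', h2⟩
        set z := eB.symm ⟨b', hm'⟩ with hz
        obtain ⟨hzx, hz2⟩ := Finset.mem_filter.mp z.prop
        refine ⟨↑z, hzx, ?_⟩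
        rw [hΦB _ ((shape_resolve (hxS _ hzx)).2.1 hz2).1 z.prop]
        simp [hz]
      · have hm' : b' ∈ y.filter fun bl => bl.1.2.2 = none := Finset.mem_filter.mpr ⟨hb', h3⟩
        set z := eC.symm ⟨b', hm'⟩ with hz
        obtain ⟨hzx, hz3⟩ := Finset.mem_filter.mp z.prop
        refine ⟨↑z, hzx, ?_⟩
        rw [hΦC _ ((shape_resolve (hxS _ hzx)).2.2 hz3).1
          ((shape_resolve (hxS _ hzx)).2.2 hz3).2 z.prop]
        simp [hz]
      · have hm' : b' ∈ y.filter fun bl => bl.1.1.isSome ∧ bl.1.2.1.isSome ∧ bl.1.2.2.isSome :=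
          Finset.mem_filter.mpr ⟨hb', h1, h2, h3⟩
        set z := eT.symm ⟨b', hm'⟩ with hz
        obtain ⟨hzx, hz1, hz2, hz3⟩ := Finset.mem_filter.mp z.prop
        refine ⟨↑z, hzx, ?_⟩
        rw [hΦT _ (Option.isSome_iff_ne_none.mp hz1) (Option.isSome_iff_ne_none.mp hz2)
          (Option.isSome_iff_ne_none.mp hz3) z.prop]
        simp [hz]
  -- the distinguished block through each index
  set Bx : Fin l → Blk l m n r := fun i => (hxl i).exists.choose with hBxdef
  have hBx : ∀ i, Bx i ∈ x ∧ (Bx i).1.1 = some i := fun i => (hxl i).exists.choose_spec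
  have hBxu : ∀ i, ∀ bl ∈ x, bl.1.1 = some i → bl = Bx i :=
    fun i bl hbl h => (hxl i).unique ⟨hbl, h⟩ ⟨(hBx i).1, (hBx i).2⟩
  set Bm : Fin m → Blk l m n r := fun j => (hxm j).exists.choose with hBmdef
  have hBm : ∀ j, Bm j ∈ x ∧ (Bm j).1.2.1 = some j := fun j => (hxm j).exists.choose_spec
  have hBmu : ∀ j, ∀ bl ∈ x, bl.1.2.1 = some j → bl = Bm j :=
    fun j bl hbl h => (hxm j).unique ⟨hbl, h⟩ ⟨(hBm j).1, (hBm j).2⟩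
  set Bn : Fin n → Blk l m n r := fun k => (hxn k).exists.choose with hBndef
  have hBn : ∀ k, Bn k ∈ x ∧ (Bn k).1.2.2 = some k := fun k => (hxn k).exists.choose_spec
  have hBnu : ∀ k, ∀ bl ∈ x, bl.1.2.2 = some k → bl = Bn k :=
    fun k bl hbl h => (hxn k).unique ⟨hbl, h⟩ ⟨(hBn k).1, (hBn k).2⟩
  -- the permutations
  set u : Fin l → Fin l := fun i => ((Φ (Bx i)).1.1).getD i with hudef
  have hu : ∀ i, (Φ (Bx i)).1.1 = some (u i) := by
    intro i
    have hne : (Φ (Bx i)).1.1 ≠ none := by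
      intro h
      have := ((hmain (Bx i) (hBx i).1).2.1).mp h
      rw [(hBx i).2] at this
      exact Option.some_ne_none _ this
    obtain ⟨k, hk⟩ := Option.ne_none_iff_exists'.mp hne
    simp [hudef, hk]
  have huinj : Function.Injective u := by
    intro i i' he
    have h1 := hu i
    rw [he] at h1
    have e1 : Φ (Bx i) = Φ (Bx i') :=
      (hyl (u i')).unique ⟨(hmain _ (hBx i).1).1, h1⟩ ⟨(hmain _ (hBx i').1).1, hu i'⟩
    have e2 : Bx i = Bx i' := hΦinj _ (hBx i).1 _ (hBx i').1 e1
    have : some i = some i' := by rw [← (hBx i).2, e2, (hBx i').2]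
    exact Option.some_injective _ this
  set v : Fin m → Fin m := fun j => ((Φ (Bm j)).1.2.1).getD j with hvdef
  have hv : ∀ j, (Φ (Bm j)).1.2.1 = some (v j) := by
    intro j
    have hne : (Φ (Bm j)).1.2.1 ≠ none := by
      intro h
      have := ((hmain (Bm j) (hBm j).1).2.2.1).mp h
      rw [(hBm j).2] at this
      exact Option.some_ne_none _ this
    obtain ⟨k, hk⟩ := Option.ne_none_iff_exists'.mp hne
    simp [hvdef, hk]
  have hvinj : Function.Injective v := by
    intro j j' he
    have h1 := hv j
    rw [he] at h1
    have e1 : Φ (Bm j) = Φ (Bm j') :=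
      (hym (v j')).unique ⟨(hmain _ (hBm j).1).1, h1⟩ ⟨(hmain _ (hBm j').1).1, hv j'⟩
    have e2 : Bm j = Bm j' := hΦinj _ (hBm j).1 _ (hBm j').1 e1
    have : some j = some j' := by rw [← (hBm j).2, e2, (hBm j').2]
    exact Option.some_injective _ this
  set w : Fin n → Fin n := fun k => ((Φ (Bn k)).1.2.2).getD k with hwdef
  have hw : ∀ k, (Φ (Bn k)).1.2.2 = some (w k) := by
    intro k
    have hne : (Φ (Bn k)).1.2.2 ≠ none := by
      intro h
      have := ((hmain (Bn k) (hBn k).1).2.2.2).mp h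
      rw [(hBn k).2] at this
      exact Option.some_ne_none _ this
    obtain ⟨k', hk⟩ := Option.ne_none_iff_exists'.mp hne
    simp [hwdef, hk]
  have hwinj : Function.Injective w := by
    intro k k' he
    have h1 := hw k
    rw [he] at h1
    have e1 : Φ (Bn k) = Φ (Bn k') :=
      (hyn (w k')).unique ⟨(hmain _ (hBn k).1).1, h1⟩ ⟨(hmain _ (hBn k').1).1, hw k'⟩
    have e2 : Bn k = Bn k' := hΦinj _ (hBn k).1 _ (hBn k').1 e1
    have : some k = some k' := by rw [← (hBn k).2, e2, (hBn k').2]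
    exact Option.some_injective _ this
  set σ₁ : Equiv.Perm (Fin l) :=
    Equiv.ofBijective u (Finite.injective_iff_bijective.mp huinj) with hσ₁def
  have hσ₁ : ∀ i, σ₁ i = u i := fun i => rfl
  set σ₂ : Equiv.Perm (Fin m) :=
    (Equiv.ofBijective v (Finite.injective_iff_bijective.mp hvinj)).symm with hσ₂def
  have hσ₂ : ∀ j, σ₂.symm j = v j := by
    intro j
    rw [hσ₂def, Equiv.symm_symm]
    rfl
  set σ₃ : Equiv.Perm (Fin n) :=
    (Equiv.ofBijective w (Finite.injective_iff_bijective.mp hwinj)).symm with hσ₃def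
  have hσ₃ : ∀ k, σ₃.symm k = w k := by
    intro k
    rw [hσ₃def, Equiv.symm_symm]
    rfl
  -- the color corrections
  set h₁ : Fin l → Cr r :=
    fun i' => (Φ (Bx (σ₁.symm i'))).2 * ((Bx (σ₁.symm i')).2)⁻¹ with hh₁def
  have hh₁ : ∀ i, h₁ (σ₁ i) = (Φ (Bx i)).2 * ((Bx i).2)⁻¹ := by
    intro i
    simp only [hh₁def, Equiv.symm_apply_apply]
  set h₂ : Fin m → Cr r :=
    fun j => if (Bm j).1.1 = none then (Φ (Bm j)).2 * ((Bm j).2)⁻¹ else 1 with hh₂def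
  set h₃ : Fin n → Cr r := fun _ => 1 with hh₃def
  refine ⟨σ₁, σ₂, σ₃, h₁, h₂, h₃, ?_⟩
  have hblock : ∀ bl ∈ x, actBlock σ₁ σ₂ σ₃ h₁ h₂ h₃ bl = Φ bl := by
    intro bl hbl
    have c1 : bl.1.1.map σ₁ = (Φ bl).1.1 := by
      cases hb1 : bl.1.1 with
      | none => simp [(hmain bl hbl).2.1.mpr hb1]
      | some i =>
        have hbe : bl = Bx i := hBxu i bl hbl hb1
        rw [hbe, hu i, Option.map_some]
        exact congrArg some (hσ₁ i)
    have c2 : bl.1.2.1.map σ₂.symm = (Φ bl).1.2.1 := by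
      cases hb2 : bl.1.2.1 with
      | none => simp [(hmain bl hbl).2.2.1.mpr hb2]
      | some j =>
        have hbe : bl = Bm j := hBmu j bl hbl hb2
        rw [hbe, hv j, Option.map_some]
        exact congrArg some (hσ₂ j)
    have c3 : bl.1.2.2.map σ₃.symm = (Φ bl).1.2.2 := by
      cases hb3 : bl.1.2.2 with
      | none => simp [(hmain bl hbl).2.2.2.mpr hb3]
      | some k =>
        have hbe : bl = Bn k := hBnu k bl hbl hb3
        rw [hbe, hw k, Option.map_some]
        exact congrArg some (hσ₃ k)
    have c4 : (bl.1.1.elim 1 fun i => h₁ (σ₁ i)) * (bl.1.2.1.elim 1 h₂) *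
        (bl.1.2.2.elim 1 h₃) * bl.2 = (Φ bl).2 := by
      have e3 : bl.1.2.2.elim (1 : Cr r) h₃ = 1 := by
        cases bl.1.2.2 <;> simp [hh₃def]
      cases hb1 : bl.1.1 with
      | some i =>
        have hbe : bl = Bx i := hBxu i bl hbl hb1
        have e2 : bl.1.2.1.elim (1 : Cr r) h₂ = 1 := by
          cases hb2 : bl.1.2.1 with
          | none => rfl
          | some j =>
            have hbe2 : bl = Bm j := hBmu j bl hbl hb2
            have : (Bm j).1.1 ≠ none := by
              rw [← hbe2, hb1]
              exact Option.some_ne_none _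
            simp only [Option.elim, hh₂def]
            rw [if_neg this]
        rw [e2, e3]
        simp only [Option.elim]
        rw [hh₁ i, ← hbe]
        group
      | none =>
        obtain ⟨j, hb2⟩ := Option.ne_none_iff_exists'.mp
          ((shape_resolve (hxS bl hbl)).1 hb1).1
        have hbe2 : bl = Bm j := hBmu j bl hbl hb2
        have hn : (Bm j).1.1 = none := by rw [← hbe2]; exact hb1
        have e2 : bl.1.2.1.elim (1 : Cr r) h₂ = (Φ bl).2 * (bl.2)⁻¹ := by
          rw [hb2]
          simp only [Option.elim, hh₂def]
          rw [if_pos hn, ← hbe2]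
        rw [e2, e3]
        simp only [Option.elim]
        group
    show actBlock σ₁ σ₂ σ₃ h₁ h₂ h₃ bl = Φ bl
    unfold actBlock
    exact Prod.ext (Prod.ext c1 (Prod.ext c2 c3)) c4
  show x.image (actBlock σ₁ σ₂ σ₃ h₁ h₂ h₃) = y
  rw [Finset.image_congr (fun bl hbl => hblock bl (Finset.mem_coe.mp hbl)), himg]
end
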